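/- arXiv:1506.04168 — 12 statements merged into one kernel-verified Lean document; each statement's English description precedes it below -/
import Mathlib

section
/- With ρ(a) as above, writing ρ(a) = (m+1)(1 - ε_a), one has (m+1)^{a+2}·(1-ε_a)^{a+1}·ε_a = m, and consequently ε_a·(m+1)^{a+2} → m as a → ∞, i.e., (m+1) - ρ(a) ∼ m·(m+1)^{-a-1}. -/
/-!
Multiplying `X^(a+1) = m ∑_{k ≤ a} X^k` by `X - 1` turns it into
`X^(a+2) - (m+1) X^(a+1) + m = 0`, which at `X = (m+1)(1-ε)` is the identity
`(m+1)^(a+2) (1-ε)^(a+1) ε = m`. The lower bound on `ρ a` gives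
`(1-ε)^(a+1) ≥ ((a+1)/(a+2))^(a+1) ≥ e⁻¹`, so `ε (m+1)^(a+2) ≤ e m` and `ε` decays
geometrically. Then `(a+1) ε → 0`, Bernoulli's inequality gives `(1-ε)^(a+1) → 1`, and the
identity yields `ε (m+1)^(a+2) = m / (1-ε)^(a+1) → m`.
-/

open Filter Topology

theorem mul_pow_mul_eq_of_eq_mul_geom_sum {R : Type*} [CommRing R] {m e : R} {n : ℕ}
    (h : ((m + 1) * (1 - e)) ^ (n + 1) =
      m * ∑ k ∈ Finset.range (n + 1), ((m + 1) * (1 - e)) ^ k) :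
    (m + 1) ^ (n + 2) * (1 - e) ^ (n + 1) * e = m := by
  set x := (m + 1) * (1 - e) with hx
  have hmul : x ^ (n + 1) * (x - 1) = m * (x ^ (n + 1) - 1) := by
    rw [← geom_sum_mul, ← mul_assoc, ← h]
  rw [hx, mul_pow] at hmul
  linear_combination -hmul

theorem Real.exp_neg_one_le_succ_div_pow (n : ℕ) :
    Real.exp (-1) ≤ (((n : ℝ) + 1) / ((n : ℝ) + 2)) ^ (n + 1) := by
  have hinv : ((n : ℝ) + 1) / ((n : ℝ) + 2) = (1 + ((n + 1 : ℕ) : ℝ)⁻¹)⁻¹ := by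
    push_cast
    field_simp
    ring
  rw [hinv, inv_pow, Real.exp_neg]
  exact inv_anti₀ (by positivity) Real.one_add_inv_pow_le_exp

theorem tendsto_succ_mul_of_mul_pow_le {ε : ℕ → ℝ} {q C : ℝ} (hq : 1 < q)
    (h0 : ∀ n, 0 ≤ ε n) (hle : ∀ n, ε n * q ^ n ≤ C) :
    Tendsto (fun n : ℕ => ((n : ℝ) + 1) * ε n) atTop (𝓝 0) := by
  have hr0 : 0 ≤ q⁻¹ := by positivity
  have hr1 : q⁻¹ < 1 := inv_lt_one_of_one_lt₀ hq
  have hgeom : Tendsto (fun n : ℕ => C * ((n : ℝ) * q⁻¹ ^ n + q⁻¹ ^ n)) atTop (𝓝 0) := by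
    simpa using ((tendsto_self_mul_const_pow_of_lt_one hr0 hr1).add
      (tendsto_pow_atTop_nhds_zero_of_lt_one hr0 hr1)).const_mul C
  refine squeeze_zero (fun n => mul_nonneg (by positivity) (h0 n)) (fun n => ?_) hgeom
  have hε : ε n ≤ C * q⁻¹ ^ n := by
    rw [inv_pow, ← div_eq_mul_inv, le_div_iff₀ (by positivity)]
    exact hle n
  calc ((n : ℝ) + 1) * ε n ≤ ((n : ℝ) + 1) * (C * q⁻¹ ^ n) := by gcongr
    _ = C * ((n : ℝ) * q⁻¹ ^ n + q⁻¹ ^ n) := by ring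

theorem tendsto_one_sub_pow_succ {ε : ℕ → ℝ} (h0 : ∀ n, 0 ≤ ε n) (h1 : ∀ n, ε n ≤ 1)
    (h : Tendsto (fun n : ℕ => ((n : ℝ) + 1) * ε n) atTop (𝓝 0)) :
    Tendsto (fun n : ℕ => (1 - ε n) ^ (n + 1)) atTop (𝓝 1) := by
  have hlow : Tendsto (fun n : ℕ => 1 - ((n : ℝ) + 1) * ε n) atTop (𝓝 1) := by
    simpa using h.const_sub 1
  refine tendsto_of_tendsto_of_tendsto_of_le_of_le hlow tendsto_const_nhds
    (fun n => ?_) (fun n => pow_le_one₀ (by linarith [h1 n]) (by linarith [h0 n]))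
  calc 1 - ((n : ℝ) + 1) * ε n = 1 + ((n + 1 : ℕ) : ℝ) * (-ε n) := by push_cast; ring
    _ ≤ (1 + -ε n) ^ (n + 1) := one_add_mul_le_pow (by linarith [h0 n, h1 n]) _
    _ = (1 - ε n) ^ (n + 1) := by ring

theorem tendsto_mul_pow_of_mul_pow_mul_eq {m : ℝ} (hm : 0 < m) {ε : ℕ → ℝ}
    (hid : ∀ n, (m + 1) ^ (n + 2) * (1 - ε n) ^ (n + 1) * ε n = m) (h0 : ∀ n, 0 ≤ ε n)
    (hlow : ∀ n : ℕ, ((n : ℝ) + 1) / ((n : ℝ) + 2) ≤ 1 - ε n) :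
    Tendsto (fun n : ℕ => ε n * (m + 1) ^ (n + 2)) atTop (𝓝 m) := by
  have hpow : ∀ n, Real.exp (-1) ≤ (1 - ε n) ^ (n + 1) := fun n =>
    (Real.exp_neg_one_le_succ_div_pow n).trans (pow_le_pow_left₀ (by positivity) (hlow n) _)
  have hscaled : ∀ n, ε n * (m + 1) ^ (n + 2) = m / (1 - ε n) ^ (n + 1) := fun n => by
    rw [eq_div_iff ((Real.exp_pos _).trans_le (hpow n)).ne']
    linear_combination hid n
  have hbound : ∀ n, ε n * (m + 1) ^ n ≤ m / Real.exp (-1) := fun n =>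
    calc ε n * (m + 1) ^ n ≤ ε n * (m + 1) ^ (n + 2) :=
          mul_le_mul_of_nonneg_left (pow_le_pow_right₀ (by linarith) (by omega)) (h0 n)
      _ ≤ m / Real.exp (-1) := by
          rw [hscaled n]
          exact div_le_div_of_nonneg_left hm.le (Real.exp_pos _) (hpow n)
  have h1 : ∀ n, ε n ≤ 1 := fun n => by
    linarith [hlow n, show (0 : ℝ) ≤ ((n : ℝ) + 1) / ((n : ℝ) + 2) by positivity]
  have hlim := tendsto_one_sub_pow_succ h0 h1
    (tendsto_succ_mul_of_mul_pow_le (by linarith) h0 hbound)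
  simpa only [hscaled, Pi.div_def, div_one] using
    (tendsto_const_nhds (x := m)).div hlim one_ne_zero

theorem stmt2_general (m : ℝ) (hm : 0 < m) (ρ : ℕ → ℝ)
    (hroot : ∀ a, (ρ a) ^ (a + 1) = m * ∑ k ∈ Finset.range (a + 1), (ρ a) ^ k)
    (hbounds : ∀ a : ℕ, ((a : ℝ) + 1) / ((a : ℝ) + 2) * (m + 1) ≤ ρ a ∧ ρ a ≤ m + 1)
    (ε : ℕ → ℝ) (hε : ∀ a, ε a = 1 - ρ a / (m + 1)) :
    (∀ a : ℕ, (m + 1) ^ (a + 2) * (1 - ε a) ^ (a + 1) * ε a = m) ∧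
      Tendsto (fun a : ℕ => ε a * (m + 1) ^ (a + 2)) atTop (nhds m) ∧
      Tendsto (fun a : ℕ => ((m + 1) - ρ a) / (m * (m + 1) ^ (-(a : ℤ) - 1)))
        atTop (nhds 1) := by
  have hm1 : 0 < m + 1 := by linarith
  have hρ : ∀ a, ρ a = (m + 1) * (1 - ε a) := fun a => by
    rw [hε a]
    field_simp
    ring
  have hid : ∀ a, (m + 1) ^ (a + 2) * (1 - ε a) ^ (a + 1) * ε a = m := fun a =>
    mul_pow_mul_eq_of_eq_mul_geom_sum (by rw [← hρ a]; exact hroot a)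
  have h0 : ∀ a, 0 ≤ ε a := fun a => by
    rw [hε a, sub_nonneg, div_le_one hm1]
    exact (hbounds a).2
  have hlow : ∀ a : ℕ, ((a : ℝ) + 1) / ((a : ℝ) + 2) ≤ 1 - ε a := fun a => by
    rw [hε a, sub_sub_cancel, le_div_iff₀ hm1]
    exact (hbounds a).1
  have hlim := tendsto_mul_pow_of_mul_pow_mul_eq hm hid h0 hlow
  refine ⟨hid, hlim, ?_⟩
  have hratio : ∀ a : ℕ, ((m + 1) - ρ a) / (m * (m + 1) ^ (-(a : ℤ) - 1)) =
      ε a * (m + 1) ^ (a + 2) / m := fun a => by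
    rw [show -(a : ℤ) - 1 = -((a + 1 : ℕ) : ℤ) by push_cast; ring, zpow_neg, zpow_natCast, hρ a]
    field_simp
    ring
  simpa only [hratio, div_self hm.ne'] using hlim.div_const m

/-- Writing `ρ a = (m+1)(1 - ε a)`, one has
`(m+1)^(a+2)·(1-ε a)^(a+1)·ε a = m`, and consequently `ε a·(m+1)^(a+2) → m` as `a → ∞`,
i.e. `(m+1) - ρ a ∼ m·(m+1)^(-a-1)`. -/
theorem stmt2 (m : ℝ) (hm : 0 < m) (ρ : ℕ → ℝ)
    (hpos : ∀ a, 0 < ρ a)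
    (hroot : ∀ a, (ρ a) ^ (a + 1) = m * ∑ k ∈ Finset.range (a + 1), (ρ a) ^ k)
    (hbounds : ∀ a : ℕ, ((a : ℝ) + 1) / ((a : ℝ) + 2) * (m + 1) ≤ ρ a ∧ ρ a ≤ m + 1)
    (ε : ℕ → ℝ) (hε : ∀ a, ε a = 1 - ρ a / (m + 1)) :
    (∀ a : ℕ, (m + 1) ^ (a + 2) * (1 - ε a) ^ (a + 1) * ε a = m) ∧
      Tendsto (fun a : ℕ => ε a * (m + 1) ^ (a + 2)) atTop (nhds m) ∧
      Tendsto (fun a : ℕ => ((m + 1) - ρ a) / (m * (m + 1) ^ (-(a : ℤ) - 1)))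
        atTop (nhds 1) :=
  stmt2_general m hm ρ hroot hbounds ε hε
end

section
/- Let m > 0 and (a_i)_{i≥0} be a non-decreasing sequence of natural numbers with a_i → ∞. If ∑_{i≥0} (m+1)^{-a_i} = ∞, then ∏_{i=1}^n ρ(a_i) = o((m+1)^n) as n → ∞. -/
open Filter

theorem stmt3_aux_key (m : ℝ) (b : ℕ) (x : ℝ)
    (hroot : x ^ (b + 1) = m * ∑ k ∈ Finset.range (b + 1), x ^ k) :
    (m + 1 - x) * x ^ (b + 1) = m := by
  have hg := geom_sum_mul x (b + 1)
  have h2 : x ^ (b + 1) * (x - 1) = m * (x ^ (b + 1) - 1) := by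
    nth_rewrite 1 [hroot]
    rw [mul_assoc, hg]
  linear_combination -h2

/-- Let `m > 0` and `(a i)` a non-decreasing sequence of naturals with
`a i → ∞`. If `∑ (m+1)^(-a i) = ∞`, then `∏_{i=1}^n ρ (a i) = o((m+1)^n)` as `n → ∞`,
where `ρ b` is the (largest) positive root of `X^(b+1) - m·∑_{k=0}^b X^k`. -/
theorem stmt3 (m : ℝ) (hm : 0 < m) (a : ℕ → ℕ) (hamono : Monotone a)
    (hainf : Tendsto a atTop atTop)
    (ρ : ℕ → ℝ) (hpos : ∀ b, 0 < ρ b)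
    (hroot : ∀ b, (ρ b) ^ (b + 1) = m * ∑ k ∈ Finset.range (b + 1), (ρ b) ^ k)
    (hdiv : ¬ Summable (fun i : ℕ => ((m + 1 : ℝ))⁻¹ ^ (a i))) :
    (fun n : ℕ => ∏ i ∈ Finset.Icc 1 n, ρ (a i)) =o[atTop]
      (fun n : ℕ => (m + 1 : ℝ) ^ n) := by
  have hm1 : (0:ℝ) < m + 1 := by linarith
  set c : ℝ := m / (m + 1) ^ 2 with hc
  have hcpos : 0 < c := div_pos hm (by positivity)
  set f : ℕ → ℝ := fun i => ((m + 1 : ℝ))⁻¹ ^ (a i) with hf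
  have hfnonneg : ∀ i, 0 ≤ f i := fun i => by positivity
  have key : ∀ b, (m + 1 - ρ b) * (ρ b) ^ (b + 1) = m :=
    fun b => stmt3_aux_key m b (ρ b) (hroot b)
  have hlt : ∀ b, ρ b < m + 1 := by
    intro b
    by_contra hle
    push_neg at hle
    have h1 : m + 1 - ρ b ≤ 0 := by linarith
    have h2 : 0 ≤ (ρ b) ^ (b + 1) := le_of_lt (pow_pos (hpos b) _)
    nlinarith [key b]
  -- per-term bound: ρ b / (m+1) ≤ exp (-(c * (m+1)⁻¹ ^ b))
  have hbound : ∀ b, ρ b / (m + 1) ≤ Real.exp (-(c * ((m + 1 : ℝ))⁻¹ ^ b)) := by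
    intro b
    have hp : (0:ℝ) < (ρ b) ^ (b + 1) := pow_pos (hpos b) _
    have h2 : (ρ b) ^ (b + 1) ≤ (m + 1) ^ (b + 1) :=
      pow_le_pow_left₀ (le_of_lt (hpos b)) (le_of_lt (hlt b)) _
    have h3 : m / (m + 1) ^ (b + 1) ≤ m + 1 - ρ b := by
      have : m + 1 - ρ b = m / (ρ b) ^ (b + 1) := by
        field_simp
        linarith [key b]
      rw [this]
      exact div_le_div_of_nonneg_left (le_of_lt hm) hp h2
    have h4 : ρ b / (m + 1) ≤ 1 - c * ((m + 1 : ℝ))⁻¹ ^ b := by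
      rw [div_le_iff₀ hm1]
      have heq : (1 - c * ((m + 1 : ℝ))⁻¹ ^ b) * (m + 1) = m + 1 - m / (m + 1) ^ (b + 1) := by
        rw [hc, inv_pow]
        field_simp
        ring
      rw [heq]
      linarith
    calc ρ b / (m + 1) ≤ 1 - c * ((m + 1 : ℝ))⁻¹ ^ b := h4
      _ ≤ Real.exp (-(c * ((m + 1 : ℝ))⁻¹ ^ b)) := by
          have := Real.add_one_le_exp (-(c * ((m + 1 : ℝ))⁻¹ ^ b))
          linarith
  -- the ratio
  set r : ℕ → ℝ := fun n => ∏ i ∈ Finset.Icc 1 n, (ρ (a i) / (m + 1)) with hr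
  have hratio : ∀ n : ℕ, (∏ i ∈ Finset.Icc 1 n, ρ (a i)) / (m + 1) ^ n = r n := by
    intro n
    rw [hr]
    simp only [Finset.prod_div_distrib, Finset.prod_const, Nat.card_Icc]
    norm_num
  have hrle : ∀ n, r n ≤ Real.exp (-(c * ∑ i ∈ Finset.Icc 1 n, f i)) := by
    intro n
    have h1 : r n ≤ ∏ i ∈ Finset.Icc 1 n, Real.exp (-(c * f i)) := by
      apply Finset.prod_le_prod
      · intro i _
        exact div_nonneg (hpos (a i)).le hm1.le
      · intro i _
        exact hbound (a i)
    rw [← Real.exp_sum] at h1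
    convert h1 using 3
    rw [Finset.mul_sum]
    simp
  have hrnonneg : ∀ n, 0 ≤ r n := by
    intro n
    apply Finset.prod_nonneg
    intro i _
    exact div_nonneg (hpos (a i)).le hm1.le
  -- partial sums of f tend to infinity
  have hsum : Tendsto (fun n => ∑ i ∈ Finset.range n, f i) atTop atTop := by
    rcases (not_summable_iff_tendsto_nat_atTop_of_nonneg hfnonneg).mp hdiv with h
    exact h
  have hsplit : ∀ n, ∑ i ∈ Finset.range (n + 1), f i = f 0 + ∑ i ∈ Finset.Icc 1 n, f i := by
    intro n
    induction n with
    | zero => simp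
    | succ n ih =>
        rw [Finset.sum_range_succ, ih, Finset.sum_Icc_succ_top (Nat.one_le_iff_ne_zero.mpr (Nat.succ_ne_zero n))]
        ring
  have hsum2 : Tendsto (fun n => ∑ i ∈ Finset.Icc 1 n, f i) atTop atTop := by
    have h1 : Tendsto (fun n => ∑ i ∈ Finset.range (n + 1), f i) atTop atTop :=
      hsum.comp (tendsto_add_atTop_nat 1)
    have h2 : (fun n => ∑ i ∈ Finset.Icc 1 n, f i) =
        fun n => (∑ i ∈ Finset.range (n + 1), f i) + (-(f 0)) := by
      funext n
      rw [hsplit n]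
      ring
    rw [h2]
    exact tendsto_atTop_add_const_right _ _ h1
  have hexp : Tendsto (fun n => Real.exp (-(c * ∑ i ∈ Finset.Icc 1 n, f i))) atTop (nhds 0) := by
    have hneg : Tendsto (fun n => -(c * ∑ i ∈ Finset.Icc 1 n, f i)) atTop atBot :=
      tendsto_neg_atTop_atBot.comp (hsum2.const_mul_atTop hcpos)
    exact Real.tendsto_exp_atBot.comp hneg
  have hr0 : Tendsto r atTop (nhds 0) :=
    squeeze_zero hrnonneg hrle hexp
  rw [Asymptotics.isLittleO_iff_tendsto (fun n h => absurd h (by positivity))]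
  exact hr0.congr fun n => (hratio n).symm
end

section
/- Let m > 0 and (a_i)_{i≥0} be a non-decreasing sequence of naturals with a_i → ∞. If ∑_{i≥0} (m+1)^{-a_i} < ∞, then there exists α > 0 such that ∏_{i=1}^n ρ(a_i) / (m+1)^n → α as n → ∞. -/
/-!
Multiplying the root equation by `ρ - 1` turns it into `(m + 1 - ρ) ρ ^ (b + 1) = m`. Once
`m (b + 1) > 1` the root exceeds `1`, so `ρ ^ (b + 1) ≥ m (b + 1)` and `m + 1 - ρ ≤ 1 / (b + 1)`;
Bernoulli's inequality then upgrades this to `ρ ^ (b + 1) ≥ m (m + 1) ^ b`, i.e.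
`0 < m + 1 - ρ ≤ (m + 1) ^ (-b)`. Hence `∑ (1 - ρ (a i) / (m + 1))` converges, and so does the
product of the ratios `ρ (a i) / (m + 1)`, to a positive limit because its logarithms are summable.
-/

open Filter Topology Finset

section Root

variable {m x : ℝ} {b : ℕ}

theorem add_one_sub_mul_pow_succ_eq (hx : x ^ (b + 1) = m * ∑ k ∈ range (b + 1), x ^ k) :
    (m + 1 - x) * x ^ (b + 1) = m := by
  have hgeom : (x - 1) * x ^ (b + 1) = m * (x ^ (b + 1) - 1) := by
    rw [← geom_sum_mul, hx]
    ring
  linear_combination -hgeom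

theorem lt_add_one_of_pow_succ_eq (hm : 0 < m) (hx0 : 0 < x)
    (hx : x ^ (b + 1) = m * ∑ k ∈ range (b + 1), x ^ k) : x < m + 1 := by
  have hid := add_one_sub_mul_pow_succ_eq hx
  have hpow : 0 < x ^ (b + 1) := pow_pos hx0 _
  nlinarith

theorem one_lt_of_pow_succ_eq (hm : 0 ≤ m) (hx0 : 0 < x) (hb : 1 < m * (b + 1))
    (hx : x ^ (b + 1) = m * ∑ k ∈ range (b + 1), x ^ k) : 1 < x := by
  by_contra! hx1
  have hsum : (b + 1) * x ^ b ≤ ∑ k ∈ range (b + 1), x ^ k := by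
    simpa using card_nsmul_le_sum (range (b + 1)) (x ^ ·) (x ^ b) fun k hk =>
      pow_le_pow_of_le_one hx0.le hx1 (Nat.lt_succ_iff.mp (mem_range.mp hk))
  have hpow : x ^ (b + 1) ≤ x ^ b := pow_le_pow_of_le_one hx0.le hx1 b.le_succ
  have hpos : 0 < x ^ b := pow_pos hx0 b
  nlinarith [mul_le_mul_of_nonneg_left hsum hm]

theorem mul_succ_le_pow_succ_of_pow_succ_eq (hm : 0 ≤ m) (hx1 : 1 ≤ x)
    (hx : x ^ (b + 1) = m * ∑ k ∈ range (b + 1), x ^ k) : m * (b + 1) ≤ x ^ (b + 1) := by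
  have hsum : (b + 1 : ℝ) ≤ ∑ k ∈ range (b + 1), x ^ k := by
    simpa using card_nsmul_le_sum (range (b + 1)) (x ^ ·) 1 fun k _ => one_le_pow₀ hx1
  rw [hx]
  exact mul_le_mul_of_nonneg_left hsum hm

-- Bernoulli's inequality for `1 - 1 / ((m + 1) (b + 1))`, scaled by `(m + 1) ^ (b + 1)`.
theorem mul_pow_le_add_one_sub_inv_succ_pow (hm : 0 ≤ m) (b : ℕ) :
    m * (m + 1) ^ b ≤ (m + 1 - 1 / (b + 1)) ^ (b + 1) := by
  set M := m + 1
  have hM : 0 < M := by positivity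
  have hbern := one_add_mul_le_pow (a := -1 / (M * (b + 1)))
    (by rw [neg_div, neg_le_neg_iff, div_le_iff₀ (by positivity)]; nlinarith) (b + 1)
  have hfactor : M - 1 / (b + 1) = M * (1 + -1 / (M * (b + 1))) := by field_simp; ring
  rw [hfactor, mul_pow]
  calc m * M ^ b = M ^ (b + 1) * (1 + ((b + 1 : ℕ) : ℝ) * (-1 / (M * (b + 1)))) := by
          push_cast; field_simp; ring
    _ ≤ _ := mul_le_mul_of_nonneg_left hbern (by positivity)

theorem add_one_sub_le_inv_pow_of_pow_succ_eq (hm : 0 < m) (hx0 : 0 < x)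
    (hb : 1 < m * (b + 1)) (hx : x ^ (b + 1) = m * ∑ k ∈ range (b + 1), x ^ k) :
    m + 1 - x ≤ (m + 1)⁻¹ ^ b := by
  set M := m + 1
  have hb0 : (0 : ℝ) < b + 1 := by positivity
  have hid : (M - x) * x ^ (b + 1) = m := add_one_sub_mul_pow_succ_eq hx
  have hgap : 0 ≤ M - x := sub_nonneg.mpr (lt_add_one_of_pow_succ_eq hm hx0 hx).le
  have hx1 := one_lt_of_pow_succ_eq hm.le hx0 hb hx
  have hlin := mul_succ_le_pow_succ_of_pow_succ_eq hm.le hx1.le hx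
  have hcoarse : M - 1 / (b + 1) ≤ x := by
    rw [sub_le_comm, le_div_iff₀ hb0]
    nlinarith [mul_le_mul_of_nonneg_left hlin hgap]
  have hbase : 0 ≤ M - 1 / (b + 1) := by
    rw [sub_nonneg, div_le_iff₀ hb0]
    nlinarith
  have hpow : m * M ^ b ≤ x ^ (b + 1) :=
    (mul_pow_le_add_one_sub_inv_succ_pow hm.le b).trans (pow_le_pow_left₀ hbase hcoarse _)
  rw [inv_pow, ← one_div, le_div_iff₀ (by positivity)]
  nlinarith [mul_le_mul_of_nonneg_left hpow hgap]

end Root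

theorem exists_tendsto_prod_Icc_div_pow {c : ℝ} {f : ℕ → ℝ} (hc : 0 < c) (hf : ∀ i, 0 < f i)
    (hsum : Summable fun i => c - f i) :
    ∃ α : ℝ, 0 < α ∧ Tendsto (fun n => (∏ i ∈ Icc 1 n, f i) / c ^ n) atTop (𝓝 α) := by
  have hshift : Summable fun i => f (i + 1) / c - 1 := by
    refine (((summable_nat_add_iff 1).mpr hsum).div_const c).neg.congr fun i => ?_
    field_simp
    ring
  obtain ⟨s, hs⟩ := Real.summable_log_one_add_of_summable hshift
  have hprod : HasProd (fun i => f (i + 1) / c) (Real.exp s) :=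
    Real.hasProd_of_hasSum_log (fun i => div_pos (hf _) hc) (by simpa using hs)
  refine ⟨_, Real.exp_pos s, hprod.tendsto_prod_nat.congr fun n => ?_⟩
  rw [prod_div_distrib, prod_const, card_range, ← Ico_add_one_right_eq_Icc,
    prod_Ico_eq_prod_range, add_tsub_cancel_right]
  simp only [add_comm]

theorem stmt4_general (m : ℝ) (hm : 0 < m) (a : ℕ → ℕ)
    (hainf : Tendsto a atTop atTop)
    (ρ : ℕ → ℝ) (hpos : ∀ b, 0 < ρ b)
    (hroot : ∀ b, (ρ b) ^ (b + 1) = m * ∑ k ∈ Finset.range (b + 1), (ρ b) ^ k)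
    (hconv : Summable (fun i : ℕ => ((m + 1 : ℝ))⁻¹ ^ (a i))) :
    ∃ α : ℝ, 0 < α ∧
      Tendsto (fun n : ℕ => (∏ i ∈ Finset.Icc 1 n, ρ (a i)) / (m + 1 : ℝ) ^ n)
        atTop (nhds α) := by
  refine exists_tendsto_prod_Icc_div_pow (by positivity) (fun i => hpos (a i)) ?_
  have hlarge : ∀ᶠ i in atTop, 1 < m * ((a i : ℝ) + 1) :=
    (((tendsto_natCast_atTop_atTop.comp hainf).atTop_add tendsto_const_nhds).const_mul_atTop
      hm).eventually_gt_atTop 1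
  refine hconv.of_norm_bounded_eventually ?_
  rw [Nat.cofinite_eq_atTop]
  filter_upwards [hlarge] with i hi
  rw [Real.norm_of_nonneg (sub_nonneg.mpr (lt_add_one_of_pow_succ_eq hm (hpos _) (hroot _)).le)]
  exact add_one_sub_le_inv_pow_of_pow_succ_eq hm (hpos _) hi (hroot _)

/-- Let `m > 0` and `(a i)` a non-decreasing sequence of naturals with
`a i → ∞`. If `∑ (m+1)^(-a i) < ∞`, then there exists `α > 0` such that
`∏_{i=1}^n ρ (a i) / (m+1)^n → α` as `n → ∞`. -/
theorem stmt4 (m : ℝ) (hm : 0 < m) (a : ℕ → ℕ) (hamono : Monotone a)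
    (hainf : Tendsto a atTop atTop)
    (ρ : ℕ → ℝ) (hpos : ∀ b, 0 < ρ b)
    (hroot : ∀ b, (ρ b) ^ (b + 1) = m * ∑ k ∈ Finset.range (b + 1), (ρ b) ^ k)
    (hconv : Summable (fun i : ℕ => ((m + 1 : ℝ))⁻¹ ^ (a i))) :
    ∃ α : ℝ, 0 < α ∧
      Tendsto (fun n : ℕ => (∏ i ∈ Finset.Icc 1 n, ρ (a i)) / (m + 1 : ℝ) ^ n)
        atTop (nhds α) :=
  stmt4_general m hm a hainf ρ hpos hroot hconv
end

section
/- Consider the deterministic recursion for mean newborn counts: m_0(0,0) = 1 and m_{n+1}(0,0) = m·∑_{k=n-a_n}^{n} m_k(0,0), where (a_n) is non-decreasing with a_{n+1} ≤ a_n + 1 and a_n ≤ n. Then m_n(0,0) ≥ ∏_{j=0}^{n-1} ρ(a_j) for all n, where ρ is non-decreasing and ρ(a) is the largest root of X^{a+1} - m·∑_{k=0}^a X^k. -/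
/-- For the mean newborn recursion `M 0 = 1`,
`M (n+1) = m·∑_{k=n-a n}^n M k`, with `(a n)` non-decreasing, `a (n+1) ≤ a n + 1`,
`a n ≤ n`, and `ρ` non-decreasing with `ρ b` a positive root of
`X^(b+1) - m·∑_{k=0}^b X^k`, one has `M n ≥ ∏_{j=0}^{n-1} ρ (a j)`. -/
theorem stmt6 (m : ℝ) (hm : 0 < m) (a : ℕ → ℕ) (hamono : Monotone a)
    (hstep : ∀ n, a (n + 1) ≤ a n + 1) (hle : ∀ n, a n ≤ n)
    (ρ : ℕ → ℝ) (hρmono : Monotone ρ) (hpos : ∀ b, 0 < ρ b)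
    (hroot : ∀ b, (ρ b) ^ (b + 1) = m * ∑ k ∈ Finset.range (b + 1), (ρ b) ^ k)
    (M : ℕ → ℝ) (hM0 : M 0 = 1)
    (hMrec : ∀ n, M (n + 1) = m * ∑ k ∈ Finset.Icc (n - a n) n, M k) :
    ∀ n : ℕ, (∏ j ∈ Finset.range n, ρ (a j)) ≤ M n := by
  have hPnn : ∀ k : ℕ, (0:ℝ) ≤ ∏ j ∈ Finset.range k, ρ (a j) :=
    fun k => Finset.prod_nonneg fun j _ => (hpos _).le
  have key : ∀ n k : ℕ, k ≤ n →
      (∏ j ∈ Finset.range n, ρ (a j)) ≤ ρ (a n) ^ (n - k) * ∏ j ∈ Finset.range k, ρ (a j) := by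
    intro n k hk
    rw [← Finset.prod_range_mul_prod_Ico _ hk, mul_comm]
    apply mul_le_mul_of_nonneg_right _ (hPnn k)
    calc ∏ j ∈ Finset.Ico k n, ρ (a j) ≤ ∏ _j ∈ Finset.Ico k n, ρ (a n) := by
          apply Finset.prod_le_prod (fun j _ => (hpos _).le)
          intro j hj
          exact hρmono (hamono (Finset.mem_Ico.mp hj).2.le)
      _ = ρ (a n) ^ (n - k) := by rw [Finset.prod_const, Nat.card_Ico]
  intro n
  induction n using Nat.strong_induction_on with
  | _ n ih =>
    match n with
    | 0 => simp [hM0]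
    | Nat.succ n =>
      have hρn := hpos (a n)
      have han : a n ≤ n := hle n
      have hpowpos : (0:ℝ) < ρ (a n) ^ (a n) := pow_pos hρn _
      refine le_of_mul_le_mul_right ?_ hpowpos
      calc (∏ j ∈ Finset.range (n+1), ρ (a j)) * ρ (a n) ^ (a n)
          = (∏ j ∈ Finset.range n, ρ (a j)) * ρ (a n) ^ (a n + 1) := by
            rw [Finset.prod_range_succ]; ring
        _ = m * ∑ i ∈ Finset.range (a n + 1),
              ρ (a n) ^ i * ∏ j ∈ Finset.range n, ρ (a j) := by
            rw [hroot (a n)]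
            simp only [Finset.mul_sum]
            exact Finset.sum_congr rfl fun i _ => by ring
        _ ≤ m * ∑ i ∈ Finset.range (a n + 1),
              M (n - a n + i) * ρ (a n) ^ (a n) := by
            apply mul_le_mul_of_nonneg_left _ hm.le
            apply Finset.sum_le_sum
            intro i hi
            have hi' : i ≤ a n := Nat.lt_succ_iff.mp (Finset.mem_range.mp hi)
            have hk : n - a n + i ≤ n := by omega
            have h1 : (∏ j ∈ Finset.range n, ρ (a j))
                ≤ ρ (a n) ^ (a n - i) * ∏ j ∈ Finset.range (n - a n + i), ρ (a j) := by
              have := key n (n - a n + i) hk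
              rwa [show n - (n - a n + i) = a n - i by omega] at this
            have h2 : (∏ j ∈ Finset.range (n - a n + i), ρ (a j)) ≤ M (n - a n + i) :=
              ih _ (by omega)
            calc ρ (a n) ^ i * ∏ j ∈ Finset.range n, ρ (a j)
                ≤ ρ (a n) ^ i * (ρ (a n) ^ (a n - i) * ∏ j ∈ Finset.range (n - a n + i), ρ (a j)) :=
                  mul_le_mul_of_nonneg_left h1 (pow_pos hρn i).le
              _ = (∏ j ∈ Finset.range (n - a n + i), ρ (a j)) * ρ (a n) ^ (a n) := by
                  rw [← mul_assoc, ← pow_add, show i + (a n - i) = a n by omega]; ring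
              _ ≤ M (n - a n + i) * ρ (a n) ^ (a n) :=
                  mul_le_mul_of_nonneg_right h2 hpowpos.le
        _ = M (n+1) * ρ (a n) ^ (a n) := by
            rw [hMrec n, show Finset.Icc (n - a n) n = Finset.Ico (n - a n) (n+1) from
              (Finset.Ico_add_one_right_eq_Icc _ _).symm]
            rw [Finset.sum_Ico_eq_sum_range, show n + 1 - (n - a n) = a n + 1 by omega]
            simp only [Finset.mul_sum, Finset.sum_mul]
            exact Finset.sum_congr rfl fun i _ => by ring
end

section
/- With the same recursion m_0(0,0) = 1, m_{n+1}(0,0) = m·∑_{k=n-a_n}^{n} m_k(0,0), and (a_n) non-decreasing, one has m_n(0,0) ≤ ρ(a_n)^n for all n ∈ ℕ. -/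
/-- For the same recursion `M 0 = 1`, `M (n+1) = m·∑_{k=n-a n}^n M k`,
with `(a n)` non-decreasing and `ρ` the (non-decreasing) largest-root function of
`X^(b+1) - m·∑_{k=0}^b X^k`, one has `M n ≤ ρ (a n) ^ n` for all `n`. -/
theorem stmt7 (m : ℝ) (hm : 0 < m) (a : ℕ → ℕ) (hamono : Monotone a)
    (hstep : ∀ n, a (n + 1) ≤ a n + 1) (hle : ∀ n, a n ≤ n)
    (ρ : ℕ → ℝ) (hρmono : Monotone ρ) (hpos : ∀ b, 0 < ρ b)
    (hroot : ∀ b, (ρ b) ^ (b + 1) = m * ∑ k ∈ Finset.range (b + 1), (ρ b) ^ k)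
    (M : ℕ → ℝ) (hM0 : M 0 = 1)
    (hMrec : ∀ n, M (n + 1) = m * ∑ k ∈ Finset.Icc (n - a n) n, M k) :
    ∀ n : ℕ, M n ≤ ρ (a n) ^ n := by
  intro n
  induction n using Nat.strong_induction_on with
  | _ n ih =>
    match n with
    | 0 => simp [hM0]
    | Nat.succ n =>
      have han := hle n
      have hx : (0:ℝ) < ρ (a n) := hpos _
      have hsum : M (n+1) ≤ m * ∑ k ∈ Finset.Icc (n - a n) n, ρ (a n) ^ k := by
        rw [hMrec]
        refine mul_le_mul_of_nonneg_left ?_ hm.le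
        refine Finset.sum_le_sum fun k hk => ?_
        have hk' : k ≤ n := (Finset.mem_Icc.mp hk).2
        calc M k ≤ ρ (a k) ^ k := ih k (Nat.lt_succ_of_le hk')
          _ ≤ ρ (a n) ^ k := pow_le_pow_left₀ (hpos _).le (hρmono (hamono hk')) k
      have hgeom : m * ∑ k ∈ Finset.Icc (n - a n) n, ρ (a n) ^ k = ρ (a n) ^ (n+1) := by
        rw [← Finset.Ico_add_one_right_eq_Icc, Finset.sum_Ico_eq_sum_range]
        have h1 : n + 1 - (n - a n) = a n + 1 := by omega
        rw [h1]
        have h2 : ∀ i ∈ Finset.range (a n + 1),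
            ρ (a n) ^ (n - a n + i) = ρ (a n) ^ (n - a n) * ρ (a n) ^ i := fun i _ =>
          pow_add _ _ _
        rw [Finset.sum_congr rfl h2, ← Finset.mul_sum, mul_left_comm, ← hroot (a n),
          ← pow_add]
        congr 1
        omega
      calc M (n+1) ≤ ρ (a n) ^ (n+1) := hgeom ▸ hsum
        _ ≤ ρ (a (n+1)) ^ (n+1) :=
          pow_le_pow_left₀ hx.le (hρmono (hamono (Nat.le_succ n))) _
end

section
/- Let (Z_n) be the aging branching process without immigration with mean offspring m = E[R] ∈ (0,∞) and non-decreasing maximal ages (a_n) with a_{n+1} ≤ a_n + 1. Then the means m_n = E[Z_n] (started from one newborn) satisfy m·m_n ≤ m_{n+1} ≤ (m+1)·m_n for all n. -/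
/-!
The newborns of generation `n + 1` are a random sum of `Z_n` offspring variables, each of
mean `m` and independent of `Z_n`, so by Wald's identity their mean is `m · m_n`. The other
individuals of generation `n + 1` are the survivors of generation `n`, those of age `< a_{n+1}`;
since `a_{n+1} ≤ a_n + 1` their mean lies between `0` and `m_n`.
-/

open MeasureTheory ProbabilityTheory
open scoped ENNReal

theorem Finset.sum_range_succ_eq_add_of_shift {M : Type*} [AddCommMonoid M] {f g : ℕ → M}
    {A : ℕ} (h : ∀ b, 1 ≤ b → f b = if b ≤ A then g (b - 1) else 0) :
    ∑ b ∈ Finset.range (A + 1), f b = f 0 + ∑ b ∈ Finset.range A, g b := by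
  rw [Finset.sum_range_succ', add_comm]
  congr 1
  refine Finset.sum_congr rfl fun b hb => ?_
  rw [h (b + 1) (Nat.le_add_left 1 b), Nat.add_sub_cancel]
  exact if_pos (Finset.mem_range.mp hb)

section

variable {Ω : Type*} [MeasurableSpace Ω] {μ : Measure Ω}

namespace MeasureTheory

theorem lintegral_sum_range_eq_tsum {N : Ω → ℕ} {X : ℕ → Ω → ℝ≥0∞} (hN : Measurable N)
    (hX : ∀ j, AEMeasurable (X j) μ) :
    ∫⁻ ω, ∑ j ∈ Finset.range (N ω), X j ω ∂μ
      = ∑' j, ∫⁻ ω, (N ⁻¹' Set.Ioi j).indicator (X j) ω ∂μ := by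
  have hpoint : ∀ ω, ∑ j ∈ Finset.range (N ω), X j ω
      = ∑' j, (N ⁻¹' Set.Ioi j).indicator (X j) ω := fun ω => by
    rw [sum_eq_tsum_indicator]
    congr with j
    by_cases hj : j < N ω <;> simp [hj]
  simp_rw [hpoint]
  exact lintegral_tsum fun j => (hX j).indicator (hN measurableSet_Ioi)

theorem lintegral_natCast_eq_tsum {N : Ω → ℕ} (hN : Measurable N) :
    ∫⁻ ω, (N ω : ℝ≥0∞) ∂μ = ∑' j, μ (N ⁻¹' Set.Ioi j) := by
  have h := lintegral_sum_range_eq_tsum (μ := μ) hN fun _ => aemeasurable_const (b := 1)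
  simp only [Finset.sum_const, Finset.card_range, nsmul_eq_mul, mul_one] at h
  rw [h]
  exact tsum_congr fun j => lintegral_indicator_one (hN measurableSet_Ioi)

end MeasureTheory

namespace ProbabilityTheory

theorem IndepFun.lintegral_indicator_preimage {β : Type*} [MeasurableSpace β] {f : Ω → β}
    {g : Ω → ℝ≥0∞} (hfg : IndepFun f g μ) (hf : Measurable f) (hg : AEMeasurable g μ)
    {s : Set β} (hs : MeasurableSet s) :
    ∫⁻ ω, (f ⁻¹' s).indicator g ω ∂μ = μ (f ⁻¹' s) * ∫⁻ ω, g ω ∂μ := by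
  have hind : IndepFun (s.indicator (1 : β → ℝ≥0∞) ∘ f) g μ :=
    hfg.comp (measurable_one.indicator hs) measurable_id
  calc ∫⁻ ω, (f ⁻¹' s).indicator g ω ∂μ
      = ∫⁻ ω, (s.indicator 1 ∘ f) ω * g ω ∂μ := by
        congr with ω
        by_cases hω : f ω ∈ s <;> simp [hω]
    _ = (∫⁻ ω, (f ⁻¹' s).indicator 1 ω ∂μ) * ∫⁻ ω, g ω ∂μ :=
        lintegral_mul_eq_lintegral_mul_lintegral_of_indepFun''
          ((measurable_one.indicator hs).comp hf).aemeasurable hg hind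
    _ = μ (f ⁻¹' s) * ∫⁻ ω, g ω ∂μ := by rw [lintegral_indicator_one (hf hs)]

/-- Wald's identity. -/
theorem lintegral_sum_range_eq_mul {N : Ω → ℕ} {X : ℕ → Ω → ℝ≥0∞} {c : ℝ≥0∞}
    (hN : Measurable N) (hX : ∀ j, AEMeasurable (X j) μ) (hmean : ∀ j, ∫⁻ ω, X j ω ∂μ = c)
    (hindep : ∀ j, IndepFun N (X j) μ) :
    ∫⁻ ω, ∑ j ∈ Finset.range (N ω), X j ω ∂μ = c * ∫⁻ ω, (N ω : ℝ≥0∞) ∂μ := by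
  rw [lintegral_sum_range_eq_tsum hN hX, lintegral_natCast_eq_tsum hN, mul_comm,
    ← ENNReal.tsum_mul_right]
  refine tsum_congr fun j => ?_
  rw [(hindep j).lintegral_indicator_preimage hN (hX j) measurableSet_Ioi, hmean j]

end ProbabilityTheory

end

theorem stmt8_general {Ω : Type*} [MeasurableSpace Ω] (μ : Measure Ω)
    (m : ℝ) (hm : 0 < m)
    (a : ℕ → ℕ) (hstep : ∀ n, a (n + 1) ≤ a n + 1)
    (R : ℕ → ℕ → Ω → ℕ) (hRmeas : ∀ j n, Measurable (R j n))
    (hRid : ∀ j n, IdentDistrib (R j n) (R 0 0) μ μ)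
    (hRmean : ∫⁻ ω, (R 0 0 ω : ℝ≥0∞) ∂μ = ENNReal.ofReal m)
    (Z : ℕ → ℕ → Ω → ℕ) (hZmeas : ∀ n b, Measurable (Z n b))
    (hshift : ∀ n b, 1 ≤ b → ∀ ω,
      Z (n + 1) b ω = if b ≤ a (n + 1) then Z n (b - 1) ω else 0)
    (hnew : ∀ n ω, Z (n + 1) 0 ω =
      ∑ j ∈ Finset.range (∑ b ∈ Finset.range (a n + 1), Z n b ω), R j (n + 1) ω)
    (hindep : ∀ n, iIndepFun
      (fun o : Option ℕ =>
        o.elim (fun ω => ∑ b ∈ Finset.range (a n + 1), Z n b ω)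
          (fun j => R j (n + 1))) μ)
    (ms : ℕ → ℝ≥0∞)
    (hms : ∀ n, ms n = ∫⁻ ω, ((∑ b ∈ Finset.range (a n + 1), Z n b ω : ℕ) : ℝ≥0∞) ∂μ) :
    ∀ n : ℕ, ENNReal.ofReal m * ms n ≤ ms (n + 1) ∧
      ms (n + 1) ≤ ENNReal.ofReal (m + 1) * ms n := by
  intro n
  set N : Ω → ℕ := fun ω => ∑ b ∈ Finset.range (a n + 1), Z n b ω
  have hN : Measurable N := Finset.measurable_sum _ fun b _ => hZmeas n b
  have hnewborns : ∫⁻ ω, (Z (n + 1) 0 ω : ℝ≥0∞) ∂μ = ENNReal.ofReal m * ms n := by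
    have hmean : ∀ j, ∫⁻ ω, (R j (n + 1) ω : ℝ≥0∞) ∂μ = ENNReal.ofReal m := fun j =>
      (((hRid j (n + 1)).comp measurable_from_top).lintegral_eq).trans hRmean
    have hindepN : ∀ j, IndepFun N (fun ω => (R j (n + 1) ω : ℝ≥0∞)) μ := fun j =>
      ((hindep n).indepFun (i := none) (j := some j) (by simp)).comp measurable_id
        measurable_from_top
    rw [hms n, ← lintegral_sum_range_eq_mul hN
      (fun j => (measurable_from_top.comp (hRmeas j (n + 1))).aemeasurable) hmean hindepN]
    exact lintegral_congr fun ω => by rw [hnew n ω, Nat.cast_sum]; rfl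
  set S : Ω → ℕ := fun ω => ∑ b ∈ Finset.range (a (n + 1)), Z n b ω
  have hsplit : ms (n + 1) = ENNReal.ofReal m * ms n + ∫⁻ ω, (S ω : ℝ≥0∞) ∂μ := by
    have hpoint : ∀ ω,
        ∑ b ∈ Finset.range (a (n + 1) + 1), Z (n + 1) b ω = Z (n + 1) 0 ω + S ω :=
      fun ω => Finset.sum_range_succ_eq_add_of_shift fun b hb => hshift n b hb ω
    simp_rw [hms (n + 1), hpoint, Nat.cast_add]
    rw [lintegral_add_left (f := fun ω => (Z (n + 1) 0 ω : ℝ≥0∞))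
      (measurable_from_top.comp (hZmeas (n + 1) 0)), hnewborns]
  have hsurvivors : ∫⁻ ω, (S ω : ℝ≥0∞) ∂μ ≤ ms n := by
    rw [hms n]
    exact lintegral_mono fun ω => Nat.cast_le.mpr <|
      Finset.sum_le_sum_of_subset (Finset.range_subset_range.mpr (hstep n))
  rw [hsplit, ENNReal.ofReal_add hm.le zero_le_one, ENNReal.ofReal_one, add_one_mul]
  exact ⟨le_self_add, add_le_add le_rfl hsurvivors⟩

/-- For the aging branching process without immigration, with i.i.d.
offspring of mean `m ∈ (0,∞)` and non-decreasing maximal ages `a` with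
`a (n+1) ≤ a n + 1`, started from one newborn, the means `m_n = E[Z_n]` satisfy
`m·m_n ≤ m_{n+1} ≤ (m+1)·m_n`. -/
theorem stmt8 {Ω : Type*} [MeasurableSpace Ω] (μ : Measure Ω) [IsProbabilityMeasure μ]
    (m : ℝ) (hm : 0 < m)
    (a : ℕ → ℕ) (hamono : Monotone a) (hstep : ∀ n, a (n + 1) ≤ a n + 1)
    (R : ℕ → ℕ → Ω → ℕ) (hRmeas : ∀ j n, Measurable (R j n))
    (hRid : ∀ j n, IdentDistrib (R j n) (R 0 0) μ μ)
    (hRmean : ∫⁻ ω, (R 0 0 ω : ℝ≥0∞) ∂μ = ENNReal.ofReal m)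
    (Z : ℕ → ℕ → Ω → ℕ) (hZmeas : ∀ n b, Measurable (Z n b))
    (hZ00 : ∀ ω, Z 0 0 ω = 1) (hZ0 : ∀ b, 1 ≤ b → ∀ ω, Z 0 b ω = 0)
    (hshift : ∀ n b, 1 ≤ b → ∀ ω,
      Z (n + 1) b ω = if b ≤ a (n + 1) then Z n (b - 1) ω else 0)
    (hnew : ∀ n ω, Z (n + 1) 0 ω =
      ∑ j ∈ Finset.range (∑ b ∈ Finset.range (a n + 1), Z n b ω), R j (n + 1) ω)
    (hindep : ∀ n, iIndepFun
      (fun o : Option ℕ =>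
        o.elim (fun ω => ∑ b ∈ Finset.range (a n + 1), Z n b ω)
          (fun j => R j (n + 1))) μ)
    (ms : ℕ → ℝ≥0∞)
    (hms : ∀ n, ms n = ∫⁻ ω, ((∑ b ∈ Finset.range (a n + 1), Z n b ω : ℕ) : ℝ≥0∞) ∂μ) :
    ∀ n : ℕ, ENNReal.ofReal m * ms n ≤ ms (n + 1) ∧
      ms (n + 1) ≤ ENNReal.ofReal (m + 1) * ms n :=
  stmt8_general μ m hm a hstep R hRmeas hRid hRmean Z hZmeas hshift hnew hindep ms hms
end

section
/- In the aging branching process with a_n → ∞, the ratio m_{n+1}/m_n converges to m+1 as n → ∞, where m_n = E[Z_n]. Consequently, for each fixed k, m_{n-k}/m_n → (m+1)^{-k}. -/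
/-!
Write `F j` for the mean number of individuals born at time `j`. Since nobody dies before reaching
the maximal age, the mean population at time `n` is the sum of `F j` over the window
`n - a n ≤ j ≤ n`, and Wald's identity gives `F (n + 1) = m * m_n`. Passing from `n` to `n + 1`
the window gains `F (n + 1)` and loses at most the cohort born at time `n - a n`, so
`(m + 1) m_n - F (n - a n) ≤ m_{n+1} ≤ (m + 1) m_n`. That cohort belongs to every window up to
time `n`, along which the partial window sums grow by the factor `m + 1` per step; hence
`F (n - a n) ≤ m_n / (m + 1) ^ min n (a n)`, which tends to `0` relative to `m_n`.
-/

open MeasureTheory ProbabilityTheory Filter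
open scoped ENNReal

open Finset Topology

theorem tendsto_ratio_of_bounds {M e : ℕ → ℝ} {q : ℝ} {k : ℕ → ℕ} (hq : 1 < q)
    (hM : ∀ n, 0 < M n) (hup : ∀ n, M (n + 1) ≤ q * M n)
    (hlow : ∀ n, q * M n ≤ M (n + 1) + e n) (he : ∀ n, q ^ k n * e n ≤ M n)
    (hk : Tendsto k atTop atTop) :
    Tendsto (fun n => M (n + 1) / M n) atTop (𝓝 q) := by
  have hlim : Tendsto (fun n => q - q⁻¹ ^ k n) atTop (𝓝 q) := by
    simpa using tendsto_const_nhds.sub ((tendsto_pow_atTop_nhds_zero_of_lt_one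
      (by positivity) (inv_lt_one_of_one_lt₀ hq)).comp hk)
  refine tendsto_of_tendsto_of_tendsto_of_le_of_le hlim tendsto_const_nhds (fun n => ?_)
    fun n => (div_le_iff₀ (hM n)).2 (hup n)
  have hqk : 0 < q ^ k n := by positivity
  have he' : e n ≤ q⁻¹ ^ k n * M n := by
    rw [inv_pow, inv_mul_eq_div, le_div_iff₀ hqk, mul_comm]; exact he n
  rw [le_div_iff₀ (hM n)]
  linarith [hlow n]

theorem tendsto_div_sub_of_tendsto_ratio {M : ℕ → ℝ} {q : ℝ} (hM : ∀ n, M n ≠ 0) (hq : q ≠ 0)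
    (h : Tendsto (fun n => M (n + 1) / M n) atTop (𝓝 q)) (k : ℕ) :
    Tendsto (fun n => M (n - k) / M n) atTop (𝓝 (q⁻¹ ^ k)) := by
  have hinv : Tendsto (fun n => M n / M (n + 1)) atTop (𝓝 q⁻¹) := by
    simpa only [Pi.inv_apply, inv_div] using h.inv₀ hq
  induction k with
  | zero => simpa using tendsto_const_nhds.congr fun n => (div_self (hM n)).symm
  | succ k ih =>
    have hlast : Tendsto (fun n => M (n - (k + 1)) / M (n - k)) atTop (𝓝 q⁻¹) := by
      refine (hinv.comp (tendsto_sub_atTop_nat (k + 1))).congr' ?_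
      filter_upwards [eventually_ge_atTop (k + 1)] with n hn
      simp only [Function.comp, show n - (k + 1) + 1 = n - k by omega]
    rw [pow_succ']
    exact (hlast.mul ih).congr fun n => div_mul_div_cancel₀ (hM (n - k))

theorem natCast_sum_range_eq_tsum (n : ℕ) (f : ℕ → ℕ) :
    ((∑ j ∈ range n, f j : ℕ) : ℝ≥0∞) = ∑' j, (if j < n then 1 else 0) * (f j : ℝ≥0∞) := by
  rw [Nat.cast_sum, sum_eq_tsum_indicator]
  congr with j
  by_cases hj : j < n <;> simp [hj]

-- Wald's identity.
theorem lintegral_sum_range_eq_mul {Ω : Type*} [MeasurableSpace Ω] {μ : Measure Ω}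
    {N : Ω → ℕ} {S : ℕ → Ω → ℕ} (hN : Measurable N) (hS : ∀ j, Measurable (S j)) {c : ℝ≥0∞}
    (hc : ∀ j, ∫⁻ ω, (S j ω : ℝ≥0∞) ∂μ = c) (hind : ∀ j, IndepFun N (S j) μ) :
    ∫⁻ ω, ((∑ j ∈ range (N ω), S j ω : ℕ) : ℝ≥0∞) ∂μ = c * ∫⁻ ω, (N ω : ℝ≥0∞) ∂μ := by
  let ind : ℕ → ℕ → ℝ≥0∞ := fun j t => if j < t then 1 else 0
  let I : ℕ → Ω → ℝ≥0∞ := fun j => ind j ∘ N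
  have hI : ∀ j, Measurable (I j) := fun j => Measurable.of_discrete.comp hN
  have hN_eq : ∀ ω, (N ω : ℝ≥0∞) = ∑' j, I j ω := fun ω => by
    simpa [I, ind] using natCast_sum_range_eq_tsum (N ω) 1
  calc ∫⁻ ω, ((∑ j ∈ range (N ω), S j ω : ℕ) : ℝ≥0∞) ∂μ
      = ∑' j, ∫⁻ ω, I j ω * S j ω ∂μ := by
        simp_rw [natCast_sum_range_eq_tsum]
        exact lintegral_tsum fun j =>
          ((hI j).mul (Measurable.of_discrete.comp (hS j))).aemeasurable
    _ = ∑' j, c * ∫⁻ ω, I j ω ∂μ := by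
        refine tsum_congr fun j => ?_
        rw [mul_comm c, ← hc j]
        exact lintegral_mul_eq_lintegral_mul_lintegral_of_indepFun'' (hI j).aemeasurable
          (Measurable.of_discrete.comp (hS j)).aemeasurable
          ((hind j).comp (φ := ind j) (ψ := Nat.cast) Measurable.of_discrete
            Measurable.of_discrete)
    _ = c * ∫⁻ ω, (N ω : ℝ≥0∞) ∂μ := by
        rw [ENNReal.tsum_mul_left, ← lintegral_tsum fun j => (hI j).aemeasurable]
        simp_rw [hN_eq]

def windowSum {R : Type*} [AddCommMonoid R] (lo : ℕ → ℕ) (F : ℕ → R) (n : ℕ) : R :=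
  ∑ j ∈ Icc (lo n) n, F j

theorem windowSum_succ {R : Type*} [AddCommMonoid R] {lo : ℕ → ℕ} (F : ℕ → R) {n : ℕ}
    (hlo : lo (n + 1) ≤ n + 1) :
    windowSum lo F (n + 1) = ∑ j ∈ Icc (lo (n + 1)) n, F j + F (n + 1) :=
  sum_Icc_succ_top hlo F

section OrderedSemiring

variable {R : Type*} [CommSemiring R] [PartialOrder R] [IsOrderedRing R]
  {lo : ℕ → ℕ} {F : ℕ → R} {c : R}

theorem windowSum_succ_le (hlo : Monotone lo) (hlo_le : ∀ n, lo n ≤ n) (hF : ∀ n, 0 ≤ F n)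
    (hrec : ∀ n, F (n + 1) = c * windowSum lo F n) (n : ℕ) :
    windowSum lo F (n + 1) ≤ (1 + c) * windowSum lo F n := by
  rw [windowSum_succ F (hlo_le _), hrec, add_mul, one_mul]
  exact add_le_add (sum_le_sum_of_subset_of_nonneg (Icc_subset_Icc (hlo n.le_succ) le_rfl)
    fun j _ _ => hF j) le_rfl

theorem le_windowSum_succ_add (hlo_succ : ∀ n, lo (n + 1) ≤ lo n + 1) (hlo_le : ∀ n, lo n ≤ n)
    (hF : ∀ n, 0 ≤ F n) (hrec : ∀ n, F (n + 1) = c * windowSum lo F n) (n : ℕ) :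
    (1 + c) * windowSum lo F n ≤ windowSum lo F (n + 1) + F (lo n) := by
  rw [windowSum_succ F (hlo_le _), hrec, add_mul, one_mul, add_right_comm]
  refine add_le_add ?_ le_rfl
  rw [windowSum, Icc_eq_cons_Ioc (hlo_le n), sum_cons, add_comm, ← Icc_add_one_left_eq_Ioc]
  exact add_le_add (sum_le_sum_of_subset_of_nonneg (Icc_subset_Icc (hlo_succ n) le_rfl)
    fun j _ _ => hF j) le_rfl

theorem pow_mul_le_windowSum (hlo : Monotone lo) (hlo_le : ∀ n, lo n ≤ n) (hc : 0 ≤ c)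
    (hF : ∀ n, 0 ≤ F n) (hrec : ∀ n, F (n + 1) = c * windowSum lo F n) (n : ℕ) :
    (1 + c) ^ (n - lo n) * F (lo n) ≤ windowSum lo F n := by
  -- The window of every time between `lo n` and `n` contains `[lo n, n]`, so the partial sums
  -- over `[lo n, j]` gain at least a factor `1 + c` at each step.
  have hkn := hlo_le n
  set k := lo n with hk
  suffices h : ∀ d, k + d ≤ n → (1 + c) ^ d * F k ≤ ∑ j ∈ Icc k (k + d), F j by
    have h' := h (n - k) (by omega)
    rwa [Nat.add_sub_cancel' hkn] at h'
  intro d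
  induction d with
  | zero => simp
  | succ d ih =>
    intro hd
    set S := ∑ j ∈ Icc k (k + d), F j
    have hS : S ≤ windowSum lo F (k + d) :=
      sum_le_sum_of_subset_of_nonneg (Icc_subset_Icc (hk ▸ hlo (by omega)) le_rfl)
        fun j _ _ => hF j
    rw [← add_assoc, sum_Icc_succ_top (by omega), hrec]
    calc (1 + c) ^ (d + 1) * F k = (1 + c) * ((1 + c) ^ d * F k) := by ring
      _ ≤ (1 + c) * S :=
        mul_le_mul_of_nonneg_left (ih (by omega)) (add_nonneg zero_le_one hc)
      _ = S + c * S := by ring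
      _ ≤ S + c * windowSum lo F (k + d) := by gcongr

end OrderedSemiring

section Real

variable {lo : ℕ → ℕ} {F : ℕ → ℝ} {c : ℝ}

theorem pos_of_windowSum_rec (hlo_le : ∀ n, lo n ≤ n)
    (hc : 0 < c) (hF0 : 0 < F 0) (hrec : ∀ n, F (n + 1) = c * windowSum lo F n) (n : ℕ) :
    0 < F n := by
  induction n using Nat.strong_induction_on with
  | _ n ih =>
    rcases n with _ | n
    · exact hF0
    · rw [hrec]
      exact mul_pos hc (sum_pos (fun j hj => ih j (Nat.lt_succ_of_le (mem_Icc.1 hj).2))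
        (nonempty_Icc.2 (hlo_le n)))

theorem windowSum_pos_of_rec (hlo_le : ∀ n, lo n ≤ n) (hc : 0 < c) (hF0 : 0 < F 0)
    (hrec : ∀ n, F (n + 1) = c * windowSum lo F n) (n : ℕ) : 0 < windowSum lo F n :=
  sum_pos (fun j _ => pos_of_windowSum_rec hlo_le hc hF0 hrec j) (nonempty_Icc.2 (hlo_le n))

theorem tendsto_windowSum_succ_div (hlo : Monotone lo) (hlo_succ : ∀ n, lo (n + 1) ≤ lo n + 1)
    (hlo_le : ∀ n, lo n ≤ n) (hc : 0 < c) (hF0 : 0 < F 0)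
    (hrec : ∀ n, F (n + 1) = c * windowSum lo F n) (hk : Tendsto (fun n => n - lo n) atTop atTop) :
    Tendsto (fun n => windowSum lo F (n + 1) / windowSum lo F n) atTop (𝓝 (1 + c)) := by
  have hF n : 0 ≤ F n := (pos_of_windowSum_rec hlo_le hc hF0 hrec n).le
  exact tendsto_ratio_of_bounds (by linarith) (windowSum_pos_of_rec hlo_le hc hF0 hrec)
    (windowSum_succ_le hlo hlo_le hF hrec) (le_windowSum_succ_add hlo_succ hlo_le hF hrec)
    (pow_mul_le_windowSum hlo hlo_le hc.le hF hrec) hk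

end Real

theorem ne_top_of_windowSum_rec {lo : ℕ → ℕ} {F : ℕ → ℝ≥0∞} {c : ℝ≥0∞} (hc : c ≠ ⊤)
    (hF0 : F 0 ≠ ⊤) (hrec : ∀ n, F (n + 1) = c * windowSum lo F n) (n : ℕ) :
    F n ≠ ⊤ := by
  induction n using Nat.strong_induction_on with
  | _ n ih =>
    rcases n with _ | n
    · exact hF0
    · rw [hrec]
      exact ENNReal.mul_ne_top hc <| ENNReal.sum_ne_top.2 fun j hj =>
        ih j (Nat.lt_succ_of_le (mem_Icc.1 hj).2)

theorem toReal_windowSum {lo : ℕ → ℕ} {F : ℕ → ℝ≥0∞} (hF : ∀ n, F n ≠ ⊤) (n : ℕ) :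
    (windowSum lo F n).toReal = windowSum lo (fun j => (F j).toReal) n :=
  ENNReal.toReal_sum fun j _ => hF j

-- `z n b` is the number of individuals of age `b` at time `n`.
structure IsAging {M : Type*} [Zero M] (a : ℕ → ℕ) (z : ℕ → ℕ → M) : Prop where
  zero_of_pos : ∀ b, 1 ≤ b → z 0 b = 0
  succ_of_pos : ∀ n b, 1 ≤ b → z (n + 1) b = if b ≤ a (n + 1) then z n (b - 1) else 0

namespace IsAging

variable {M : Type*} {a : ℕ → ℕ} {z : ℕ → ℕ → M}

theorem eq_ite [Zero M] (hz : IsAging a z) (hstep : ∀ n, a (n + 1) ≤ a n + 1) :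
    ∀ n b, b ≤ a n → z n b = if b ≤ n then z (n - b) 0 else 0
  | _, 0, _ => by simp
  | 0, b + 1, _ => by simp [hz.zero_of_pos]
  | n + 1, b + 1, hb => by
    rw [hz.succ_of_pos n (b + 1) (by omega), if_pos hb, Nat.add_sub_cancel,
      hz.eq_ite hstep n b (by have := hstep n; omega)]
    simp

theorem sum_range_eq_windowSum [AddCommMonoid M] (hz : IsAging a z)
    (hstep : ∀ n, a (n + 1) ≤ a n + 1) (n : ℕ) :
    ∑ b ∈ range (a n + 1), z n b = windowSum (fun n => n - a n) (fun j => z j 0) n := by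
  rw [sum_congr rfl fun b hb => hz.eq_ite hstep n b (Nat.lt_succ_iff.1 (mem_range.1 hb)),
    ← sum_filter]
  refine sum_nbij' (fun b => n - b) (fun j => n - j) ?_ ?_ ?_ ?_ fun _ _ => rfl
  all_goals intro x hx; simp only [mem_filter, mem_range, mem_Icc] at hx ⊢; omega

end IsAging

theorem monotone_sub_of_le_add_one {a : ℕ → ℕ} (hstep : ∀ n, a (n + 1) ≤ a n + 1) :
    Monotone fun n => n - a n :=
  monotone_nat_of_le_succ fun n => by have := hstep n; omega

theorem add_one_sub_le_sub_add_one {a : ℕ → ℕ} (ha : Monotone a) (n : ℕ) :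
    n + 1 - a (n + 1) ≤ n - a n + 1 := by
  have := ha (Nat.le_add_right n 1); omega

theorem tendsto_sub_sub_atTop {a : ℕ → ℕ} (ha : Tendsto a atTop atTop) :
    Tendsto (fun n => n - (n - a n)) atTop atTop := by
  refine tendsto_atTop_atTop.2 fun b => ?_
  obtain ⟨N, hN⟩ := tendsto_atTop_atTop.1 ha b
  exact ⟨max N b, fun n hn => by have := hN n (le_of_max_le_left hn); omega⟩

/-- For the aging branching process without immigration with `a n → ∞`,
the ratio of consecutive means `m_{n+1}/m_n → m+1`; consequently, for each fixed `k`,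
`m_{n-k}/m_n → (m+1)^{-k}`. -/
theorem stmt9 {Ω : Type*} [MeasurableSpace Ω] (μ : Measure Ω) [IsProbabilityMeasure μ]
    (m : ℝ) (hm : 0 < m)
    (a : ℕ → ℕ) (hamono : Monotone a) (hstep : ∀ n, a (n + 1) ≤ a n + 1)
    (hainf : Tendsto a atTop atTop)
    (R : ℕ → ℕ → Ω → ℕ) (hRmeas : ∀ j n, Measurable (R j n))
    (hRid : ∀ j n, IdentDistrib (R j n) (R 0 0) μ μ)
    (hRmean : ∫⁻ ω, (R 0 0 ω : ℝ≥0∞) ∂μ = ENNReal.ofReal m)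
    (Z : ℕ → ℕ → Ω → ℕ) (hZmeas : ∀ n b, Measurable (Z n b))
    (hZ00 : ∀ ω, Z 0 0 ω = 1) (hZ0 : ∀ b, 1 ≤ b → ∀ ω, Z 0 b ω = 0)
    (hshift : ∀ n b, 1 ≤ b → ∀ ω,
      Z (n + 1) b ω = if b ≤ a (n + 1) then Z n (b - 1) ω else 0)
    (hnew : ∀ n ω, Z (n + 1) 0 ω =
      ∑ j ∈ Finset.range (∑ b ∈ Finset.range (a n + 1), Z n b ω), R j (n + 1) ω)
    (hindep : ∀ n, iIndepFun
      (fun o : Option ℕ =>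
        o.elim (fun ω => ∑ b ∈ Finset.range (a n + 1), Z n b ω)
          (fun j => R j (n + 1))) μ)
    (ms : ℕ → ℝ)
    (hms : ∀ n, ms n =
      (∫⁻ ω, ((∑ b ∈ Finset.range (a n + 1), Z n b ω : ℕ) : ℝ≥0∞) ∂μ).toReal) :
    Tendsto (fun n : ℕ => ms (n + 1) / ms n) atTop (nhds (m + 1)) ∧
      ∀ k : ℕ, Tendsto (fun n : ℕ => ms (n - k) / ms n) atTop
        (nhds ((m + 1 : ℝ)⁻¹ ^ k)) := by
  let lo : ℕ → ℕ := fun n => n - a n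
  have hlo_le : ∀ n, lo n ≤ n := fun n => n.sub_le _
  let B : ℕ → ℝ≥0∞ := fun n => ∫⁻ ω, (Z n 0 ω : ℝ≥0∞) ∂μ
  have hpop n : ∫⁻ ω, ((∑ b ∈ range (a n + 1), Z n b ω : ℕ) : ℝ≥0∞) ∂μ = windowSum lo B n := by
    have hZ ω : IsAging a fun n b => Z n b ω :=
      ⟨fun b hb => hZ0 b hb ω, fun n b hb => hshift n b hb ω⟩
    simp_rw [(hZ _).sum_range_eq_windowSum hstep n, windowSum, Nat.cast_sum]
    exact lintegral_finsetSum _ fun j _ => Measurable.of_discrete.comp (hZmeas j 0)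
  have hB n : B (n + 1) = ENNReal.ofReal m * windowSum lo B n := by
    rw [← hpop, ← lintegral_sum_range_eq_mul (Finset.measurable_sum _ fun b _ => hZmeas n b)
      (fun j => hRmeas j (n + 1))
      (fun j => hRmean ▸ ((hRid j (n + 1)).comp Measurable.of_discrete).lintegral_eq)
      (fun j => (hindep n).indepFun (i := none) (j := some j) (by simp))]
    exact lintegral_congr fun ω => by rw [hnew]
  have hB0 : B 0 = 1 := by simp [B, hZ00]
  have hfin := ne_top_of_windowSum_rec ENNReal.ofReal_ne_top (by simp [hB0]) hB
  let F : ℕ → ℝ := fun n => (B n).toReal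
  have hrec n : F (n + 1) = m * windowSum lo F n := by
    rw [show F (n + 1) = (B (n + 1)).toReal from rfl, hB, ENNReal.toReal_mul,
      ENNReal.toReal_ofReal hm.le, toReal_windowSum hfin]
  have hms' : ms = windowSum lo F :=
    funext fun n => by rw [hms, hpop, toReal_windowSum hfin]
  have hF0 : 0 < F 0 := by simp [F, hB0]
  subst hms'
  have hratio := tendsto_windowSum_succ_div (monotone_sub_of_le_add_one hstep)
    (add_one_sub_le_sub_add_one hamono) hlo_le hm hF0 hrec (tendsto_sub_sub_atTop hainf)
  rw [add_comm] at hratio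
  exact ⟨hratio, tendsto_div_sub_of_tendsto_ratio
    (fun n => (windowSum_pos_of_rec hlo_le hm hF0 hrec n).ne') (by positivity) hratio⟩
end

section
/- Let P be a Markov kernel on a countable set S satisfying the Doeblin condition P(x, ·) ≥ c·δ_{x_0}(·) for all x ∈ S, where c ∈ (0,1) and x_0 ∈ S is fixed. Then for any probability measures μ, ν on S, d_TV(μP, νP) ≤ (1-c)·d_TV(μ, ν). -/
/-!
Write `f = μ - ν`, so `∑ f = 0`. Because of this, subtracting from each row of `P` the
constant measure `c δ_{x₀}` does not change `f P`, and the Doeblin condition makes the residual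
kernel `Q = P - c δ_{x₀}` nonnegative with row sums `1 - c`. A nonnegative kernel with row sums
`r` contracts the `ℓ¹` norm by the factor `r`, hence `‖f P‖₁ = ‖f Q‖₁ ≤ (1 - c) ‖f‖₁`.
-/

section

variable {S : Type*}

theorem Summable.mul_of_abs_le {f g : S → ℝ} (hf : Summable f) {C : ℝ} (hg : ∀ x, |g x| ≤ C) :
    Summable fun x => f x * g x :=
  Summable.of_norm_bounded (hf.norm.mul_right C) fun x => by
    rw [norm_mul]
    exact mul_le_mul_of_nonneg_left (hg x) (norm_nonneg _)

theorem tsum_mul_sub_const_of_tsum_eq_zero {f g : S → ℝ} (hf : Summable f)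
    (hf0 : ∑' x, f x = 0) (hfg : Summable fun x => f x * g x) (a : ℝ) :
    ∑' x, f x * (g x - a) = ∑' x, f x * g x := by
  simp only [mul_sub]
  rw [hfg.tsum_sub (hf.mul_right a), tsum_mul_right, hf0, zero_mul, sub_zero]

section KernelContraction

variable {Q : S → S → ℝ} {r : ℝ}

theorem tsum_abs_tsum_mul_le (hQ : ∀ x y, 0 ≤ Q x y) (hQs : ∀ x, Summable (Q x))
    (hQr : ∀ x, ∑' y, Q x y ≤ r) {f : S → ℝ} (hf : Summable f) :
    ∑' y, |∑' x, f x * Q x y| ≤ r * ∑' x, |f x| := by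
  have hQabs : ∀ x y, |Q x y| ≤ r := fun x y => by
    rw [abs_of_nonneg (hQ x y)]
    exact ((hQs x).le_tsum y fun z _ => hQ x z).trans (hQr x)
  have habs : ∀ x y, |f x * Q x y| = |f x| * Q x y := fun x y => by
    rw [abs_mul, abs_of_nonneg (hQ x y)]
  have hrows : ∀ x, Summable fun y => |f x| * Q x y := fun x => (hQs x).mul_left _
  have hcols : ∀ y, Summable fun x => |f x| * Q x y := fun y =>
    hf.abs.mul_of_abs_le (hQabs · y)
  have hmass : ∀ x, ∑' y, |f x| * Q x y ≤ |f x| * r := fun x => by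
    rw [tsum_mul_left]
    exact mul_le_mul_of_nonneg_left (hQr x) (abs_nonneg _)
  have hmass_summable : Summable fun x => ∑' y, |f x| * Q x y :=
    (hf.abs.mul_right r).of_nonneg_of_le
      (fun x => tsum_nonneg fun y => mul_nonneg (abs_nonneg _) (hQ x y)) hmass
  have hjoint : Summable (Function.uncurry fun x y => |f x| * Q x y) :=
    (summable_prod_of_nonneg fun p => mul_nonneg (abs_nonneg _) (hQ p.1 p.2)).2
      ⟨hrows, hmass_summable⟩
  have hpointwise : ∀ y, |∑' x, f x * Q x y| ≤ ∑' x, |f x| * Q x y := fun y => by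
    simpa only [Real.norm_eq_abs, habs] using norm_tsum_le_tsum_norm (f := fun x => f x * Q x y)
      (by simpa only [Real.norm_eq_abs, habs] using hcols y)
  calc ∑' y, |∑' x, f x * Q x y|
      ≤ ∑' y, ∑' x, |f x| * Q x y :=
        Summable.tsum_le_tsum hpointwise
          ((hjoint.prod_symm.prod).of_nonneg_of_le (fun _ => abs_nonneg _) hpointwise)
          hjoint.prod_symm.prod
    _ = ∑' x, ∑' y, |f x| * Q x y := hjoint.tsum_comm' hrows hcols
    _ ≤ ∑' x, |f x| * r := hmass_summable.tsum_le_tsum hmass (hf.abs.mul_right r)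
    _ = r * ∑' x, |f x| := by rw [tsum_mul_right, mul_comm]

end KernelContraction

section DoeblinResidual

variable [DecidableEq S] (P : S → S → ℝ) (x₀ : S) (c : ℝ)

def doeblinResidual (x y : S) : ℝ :=
  P x y - if y = x₀ then c else 0

variable {P x₀ c}

theorem doeblinResidual_nonneg (hPnn : ∀ x y, 0 ≤ P x y) (hDoeblin : ∀ x, c ≤ P x x₀)
    (x y : S) : 0 ≤ doeblinResidual P x₀ c x y := by
  unfold doeblinResidual
  split_ifs with h
  · exact sub_nonneg.2 (h ▸ hDoeblin x)
  · simpa using hPnn x y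

theorem summable_doeblinResidual (hPsummable : ∀ x, Summable (P x)) (x : S) :
    Summable (doeblinResidual P x₀ c x) :=
  (hPsummable x).sub (hasSum_ite_eq x₀ c).summable

theorem tsum_doeblinResidual (hPsummable : ∀ x, Summable (P x)) (x : S) :
    ∑' y, doeblinResidual P x₀ c x y = ∑' y, P x y - c := by
  unfold doeblinResidual
  rw [(hPsummable x).tsum_sub (hasSum_ite_eq x₀ c).summable, tsum_ite_eq]

end DoeblinResidual

end

theorem stmt10_general {S : Type*} (P : S → S → ℝ) (c : ℝ) (x₀ : S)
    (hPnn : ∀ x y, 0 ≤ P x y) (hPsummable : ∀ x, Summable (P x))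
    (hPsum : ∀ x, ∑' y, P x y = 1)
    (hDoeblin : ∀ x, c ≤ P x x₀)
    (μ ν : S → ℝ) (hμs : Summable μ) (hνs : Summable ν)
    (hμ1 : ∑' x, μ x = 1) (hν1 : ∑' x, ν x = 1) :
    (1 / 2) * ∑' y, |(∑' x, μ x * P x y) - (∑' x, ν x * P x y)| ≤
      (1 - c) * ((1 / 2) * ∑' x, |μ x - ν x|) := by
  classical
  have hP_abs_le : ∀ x y, |P x y| ≤ 1 := fun x y => by
    rw [abs_of_nonneg (hPnn x y), ← hPsum x]
    exact (hPsummable x).le_tsum y fun z _ => hPnn x z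
  have hf : Summable fun x => μ x - ν x := hμs.sub hνs
  have hf0 : ∑' x, (μ x - ν x) = 0 := by rw [hμs.tsum_sub hνs, hμ1, hν1, sub_self]
  have hdiff : ∀ y, (∑' x, μ x * P x y) - (∑' x, ν x * P x y) =
      ∑' x, (μ x - ν x) * doeblinResidual P x₀ c x y := fun y => by
    rw [← (hμs.mul_of_abs_le (hP_abs_le · y)).tsum_sub (hνs.mul_of_abs_le (hP_abs_le · y))]
    unfold doeblinResidual
    simp only [← sub_mul]
    exact (tsum_mul_sub_const_of_tsum_eq_zero hf hf0 (hf.mul_of_abs_le (hP_abs_le · y)) _).symm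
  have hcontract := tsum_abs_tsum_mul_le (doeblinResidual_nonneg hPnn hDoeblin)
    (summable_doeblinResidual hPsummable)
    (fun x => (tsum_doeblinResidual hPsummable x).trans_le (by rw [hPsum])) hf
  simp only [hdiff]
  linarith

/-- Let `P` be a Markov kernel on a countable set `S` satisfying the
Doeblin condition `P x · ≥ c·δ_{x₀}` for a fixed `x₀ ∈ S` and `c ∈ (0,1)`. Then for
any probability measures `μ, ν` on `S`, `d_TV(μP, νP) ≤ (1-c)·d_TV(μ, ν)`. -/
theorem stmt10 {S : Type*} [Countable S] (P : S → S → ℝ) (c : ℝ)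
    (hc : c ∈ Set.Ioo (0 : ℝ) 1) (x₀ : S)
    (hPnn : ∀ x y, 0 ≤ P x y) (hPsummable : ∀ x, Summable (P x))
    (hPsum : ∀ x, ∑' y, P x y = 1)
    (hDoeblin : ∀ x, c ≤ P x x₀)
    (μ ν : S → ℝ) (hμnn : ∀ x, 0 ≤ μ x) (hνnn : ∀ x, 0 ≤ ν x)
    (hμs : Summable μ) (hνs : Summable ν)
    (hμ1 : ∑' x, μ x = 1) (hν1 : ∑' x, ν x = 1) :
    (1 / 2) * ∑' y, |(∑' x, μ x * P x y) - (∑' x, ν x * P x y)| ≤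
      (1 - c) * ((1 / 2) * ∑' x, |μ x - ν x|) :=
  stmt10_general P c x₀ hPnn hPsummable hPsum hDoeblin μ ν hμs hνs hμ1 hν1
end

section
/- Let (X_n) be a sequence of positive-integer-valued random variables, and for each n let (X_{i,n})_{i≥1} be identically distributed centered random variables, independent of X_n, with sup_{i,n} E[X_{i,n}^2] < ∞ (where additionally for each n the family (X_{i,n})_i is such that E[(∑_{i=1}^{k} X_{i,n})^2] ≤ k·sup E[X_{i,n}^2] for all k, e.g. pairwise uncorrelated). Then (1/X_n)·∑_{i=1}^{X_n} X_{i,n} → 0 almost surely on the event {liminf_n (1/n)·log X_n > 0}. -/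
/-!
By Chebyshev, `P(|S_k| ≥ ε k) ≤ C / (ε² k)` for the partial sums `S_k = ∑_{i<k} Y i n`. Since `X n`
is independent of the row `(Y i n)_i`, conditioning on `X n = k` and averaging over `k ≥ t` gives
`P(X n ≥ t, |S_{X n}| ≥ ε X n) ≤ C / (ε² t)`. With `t = exp (n / (m + 1))` and `ε = 1 / (m + 1)`
this is summable in `n`, so by Borel–Cantelli, almost surely, for every `m` these events happen
only finitely often. On `{liminf (log X n) / n > 0}` eventually `X n ≥ exp (n / (m + 1))` for
large `m`, hence `|S_{X n}| / X n < 1 / (m + 1)` eventually.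
-/

open MeasureTheory ProbabilityTheory Filter

section
variable {Ω : Type*} {m mΩ : MeasurableSpace Ω} {μ : Measure Ω}

theorem measure_abs_ge_le_of_integral_sq_le [IsFiniteMeasure μ] {f : Ω → ℝ}
    (hf : Integrable (fun ω => f ω ^ 2) μ) {t V : ℝ} (ht : 0 < t)
    (hV : ∫ ω, f ω ^ 2 ∂μ ≤ V) :
    μ {ω | t ≤ |f ω|} ≤ ENNReal.ofReal (V / t ^ 2) := by
  have hsq : {ω | t ≤ |f ω|} = {ω | t ^ 2 ≤ f ω ^ 2} := by
    ext ω
    rw [Set.mem_ofPred_eq, Set.mem_ofPred_eq, ← sq_abs (f ω)]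
    exact (pow_le_pow_iff_left₀ ht.le (abs_nonneg _) two_ne_zero).symm
  have markov := mul_meas_ge_le_integral_of_nonneg (ae_of_all μ fun ω => sq_nonneg (f ω)) hf (t ^ 2)
  rw [hsq, ← ofReal_measureReal]
  exact ENNReal.ofReal_le_ofReal <| (le_div_iff₀' (by positivity)).2 (markov.trans hV)

theorem measure_setOf_mem_le_of_indep [IsProbabilityMeasure μ]
    {N : Ω → ℕ} (hN : Measurable N) {A : ℕ → Set Ω} (hA : ∀ k, MeasurableSet[m] (A k))
    (hind : Indep (MeasurableSpace.comap N inferInstance) m μ) {b : ENNReal}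
    (hb : ∀ k, μ (A k) ≤ b) :
    μ {ω | ω ∈ A (N ω)} ≤ b := by
  have hunion : {ω | ω ∈ A (N ω)} = ⋃ k, N ⁻¹' {k} ∩ A k := by ext ω; simp
  have hfibers : ∑' k, μ (N ⁻¹' {k}) = 1 := by
    rw [← measure_iUnion (pairwise_disjoint_fiber N) fun k => hN (measurableSet_singleton k),
      Set.iUnion_eq_univ_iff.2 fun ω => ⟨N ω, rfl⟩, measure_univ]
  calc μ {ω | ω ∈ A (N ω)} ≤ ∑' k, μ (N ⁻¹' {k} ∩ A k) := hunion ▸ measure_iUnion_le _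
    _ = ∑' k, μ (N ⁻¹' {k}) * μ (A k) := by
      congr with k
      exact (Indep_iff _ _ _).1 hind _ _ ⟨{k}, measurableSet_singleton k, rfl⟩ (hA k)
    _ ≤ ∑' k, μ (N ⁻¹' {k}) * b := by gcongr with k; exact hb k
    _ = b := by rw [ENNReal.tsum_mul_right, hfibers, one_mul]

theorem measure_abs_sum_range_ge_le [IsFiniteMeasure μ] {Z : ℕ → Ω → ℝ}
    (hZ : ∀ i, Measurable (Z i))
    (hZsq : ∀ i, Integrable (fun ω => Z i ω ^ 2) μ) {C : ℝ}
    (hsum : ∀ k, ∫ ω, (∑ i ∈ Finset.range k, Z i ω) ^ 2 ∂μ ≤ k * C) {ε : ℝ} (hε : 0 < ε)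
    {k : ℕ} (hk : 0 < k) :
    μ {ω | ε * k ≤ |∑ i ∈ Finset.range k, Z i ω|} ≤ ENNReal.ofReal (C / (ε ^ 2 * k)) := by
  have hmem : MemLp (fun ω => ∑ i ∈ Finset.range k, Z i ω) 2 μ :=
    memLp_finsetSum _ fun i _ =>
      (memLp_two_iff_integrable_sq (hZ i).aestronglyMeasurable).2 (hZsq i)
  convert measure_abs_ge_le_of_integral_sq_le hmem.integrable_sq (t := ε * k) (by positivity)
    (hsum k) using 2
  field_simp

theorem measure_le_and_abs_sum_range_ge_le [IsProbabilityMeasure μ]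
    {N : Ω → ℕ} (hN : Measurable N) {Z : ℕ → Ω → ℝ} (hZ : ∀ i, Measurable (Z i))
    (hZsq : ∀ i, Integrable (fun ω => Z i ω ^ 2) μ) {C : ℝ}
    (hsum : ∀ k, ∫ ω, (∑ i ∈ Finset.range k, Z i ω) ^ 2 ∂μ ≤ k * C)
    (hind : Indep (MeasurableSpace.comap N inferInstance)
      (⨆ i, MeasurableSpace.comap (Z i) inferInstance) μ) {ε t : ℝ} (hε : 0 < ε) (ht : 0 < t) :
    μ {ω | t ≤ N ω ∧ ε * N ω ≤ |∑ i ∈ Finset.range (N ω), Z i ω|}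
      ≤ ENNReal.ofReal (C / (ε ^ 2 * t)) := by
  have hC : 0 ≤ C := by
    simpa using (integral_nonneg fun ω => sq_nonneg (Z 0 ω)).trans (by simpa using hsum 1)
  let A : ℕ → Set Ω := fun k =>
    if t ≤ k then {ω | ε * k ≤ |∑ i ∈ Finset.range k, Z i ω|} else ∅
  refine (measure_mono fun ω hω => ?_).trans
    (measure_setOf_mem_le_of_indep hN (A := A) (fun k => ?_) hind fun k => ?_)
  · simp only [A, Set.mem_ofPred_eq, if_pos hω.1]
    exact hω.2
  · by_cases htk : t ≤ k
    · have hsum_meas : Measurable[⨆ i, MeasurableSpace.comap (Z i) inferInstance]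
          fun ω => ∑ i ∈ Finset.range k, Z i ω :=
        Finset.measurable_sum _ fun i _ => measurable_iff_comap_le.2 (le_iSup_of_le i le_rfl)
      simp only [A, if_pos htk]
      exact hsum_meas (measurable_abs measurableSet_Ici)
    · simp only [A, if_neg htk, MeasurableSet.empty]
  · by_cases htk : t ≤ k
    · have hk : 0 < k := by exact_mod_cast ht.trans_le htk
      simp only [A, if_pos htk]
      refine (measure_abs_sum_range_ge_le hZ hZsq hsum hε hk).trans (ENNReal.ofReal_le_ofReal ?_)
      gcongr
    · simp only [A, if_neg htk, measure_empty, zero_le]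

theorem tendsto_div_nhds_zero_of_eventually_abs_lt {x s : ℕ → ℝ} (hx : ∀ n, 0 ≤ x n)
    (h : ∀ m : ℕ, ∀ᶠ n : ℕ in atTop,
      ¬(Real.exp (n / (m + 1)) ≤ x n ∧ 1 / (m + 1) * x n ≤ |s n|))
    (hgrowth : ∃ c : ℝ, 0 < c ∧ ∀ᶠ n : ℕ in atTop, c * n ≤ Real.log (x n)) :
    Tendsto (fun n => s n / x n) atTop (nhds 0) := by
  obtain ⟨c, hc, hlog⟩ := hgrowth
  rw [NormedAddGroup.tendsto_nhds_zero]
  intro ε hε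
  obtain ⟨m, hm⟩ := exists_nat_one_div_lt (lt_min hc hε)
  filter_upwards [h m, hlog, eventually_gt_atTop 0] with n hn hn_log hn_pos
  -- `Real.log 0 = 0`, so for `n > 0` the growth bound forces `x n > 1`.
  have hx_pos : 0 < x n := by
    have : 0 < Real.log (x n) := lt_of_lt_of_le (by positivity) hn_log
    linarith [(Real.log_pos_iff (hx n)).1 this]
  have hexp : Real.exp (n / (m + 1)) ≤ x n := by
    calc Real.exp (n / (m + 1)) ≤ Real.exp (c * n) := by
          gcongr
          rw [div_eq_mul_one_div, mul_comm]
          gcongr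
          exact (hm.trans_le (min_le_left _ _)).le
      _ ≤ x n := by rwa [← Real.exp_log hx_pos, Real.exp_le_exp]
  have habs : |s n| < 1 / (m + 1) * x n := lt_of_not_ge fun h' => hn ⟨hexp, h'⟩
  rw [Real.norm_eq_abs, abs_div, abs_of_pos hx_pos, div_lt_iff₀ hx_pos]
  exact habs.trans_le (by gcongr; exact (hm.trans_le (min_le_right _ _)).le)

theorem summable_div_sq_mul_exp_div (C : ℝ) (m : ℕ) :
    Summable fun n : ℕ => C / ((1 / (m + 1)) ^ 2 * Real.exp (n / (m + 1))) := by
  have hgeom : Summable fun n : ℕ => Real.exp (n * -(1 / (m + 1))) :=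
    Real.summable_exp_nat_mul_iff.2 (by simp; positivity)
  refine (hgeom.mul_left (C * (m + 1) ^ 2)).congr fun n => ?_
  rw [mul_neg, Real.exp_neg]
  field_simp

end

theorem stmt12_general {Ω : Type*} [MeasurableSpace Ω] (μ : Measure Ω) [IsProbabilityMeasure μ]
    (X : ℕ → Ω → ℕ) (hXmeas : ∀ n, Measurable (X n))
    (Y : ℕ → ℕ → Ω → ℝ) (hYmeas : ∀ i n, Measurable (Y i n))
    (hYsq : ∀ i n, Integrable (fun ω => (Y i n ω) ^ 2) μ)
    (C : ℝ)
    (hsum2 : ∀ n k, ∫ ω, (∑ i ∈ Finset.range k, Y i n ω) ^ 2 ∂μ ≤ k * C)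
    (hindep : ∀ n, Indep (MeasurableSpace.comap (X n) inferInstance)
      (⨆ i, MeasurableSpace.comap (Y i n) inferInstance) μ) :
    ∀ᵐ ω ∂μ,
      (∃ c : ℝ, 0 < c ∧ ∀ᶠ n : ℕ in atTop, c * n ≤ Real.log (X n ω)) →
      Tendsto (fun n : ℕ => (∑ i ∈ Finset.range (X n ω), Y i n ω) / (X n ω))
        atTop (nhds 0) := by
  have hbad : ∀ m : ℕ, ∀ᵐ ω ∂μ, ∀ᶠ n : ℕ in atTop, ¬(Real.exp (n / (m + 1)) ≤ X n ω ∧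
      1 / (m + 1) * X n ω ≤ |∑ i ∈ Finset.range (X n ω), Y i n ω|) := fun m =>
    ae_eventually_notMem <| ne_top_of_le_ne_top (summable_div_sq_mul_exp_div C m).tsum_ofReal_ne_top
      (ENNReal.tsum_le_tsum fun n => measure_le_and_abs_sum_range_ge_le (hXmeas n)
        (fun i => hYmeas i n) (fun i => hYsq i n) (hsum2 n) (hindep n) (by positivity)
        (Real.exp_pos _))
  filter_upwards [ae_all_iff.2 hbad] with ω hω hgrowth
  exact tendsto_div_nhds_zero_of_eventually_abs_lt (fun n => Nat.cast_nonneg _) hω hgrowth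

/-- Conditional law of large numbers. If `(X n)` are positive-integer
valued random variables and, for each `n`, `(Y i n)` are identically distributed
centered random variables independent of `X n`, with uniformly bounded second
moments and `E[(∑_{i<k} Y i n)²] ≤ k·C` (e.g. pairwise uncorrelated), then
`(1/X n)·∑_{i<X n} Y i n → 0` almost surely on the event
`{liminf (log X n)/n > 0}` (expressed by its eventual-bound characterization). -/
theorem stmt12 {Ω : Type*} [MeasurableSpace Ω] (μ : Measure Ω) [IsProbabilityMeasure μ]
    (X : ℕ → Ω → ℕ) (hXmeas : ∀ n, Measurable (X n)) (hXpos : ∀ n ω, 1 ≤ X n ω)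
    (Y : ℕ → ℕ → Ω → ℝ) (hYmeas : ∀ i n, Measurable (Y i n))
    (hYint : ∀ i n, Integrable (Y i n) μ)
    (hYsq : ∀ i n, Integrable (fun ω => (Y i n ω) ^ 2) μ)
    (hYcentered : ∀ i n, ∫ ω, Y i n ω ∂μ = 0)
    (hYid : ∀ i j n, IdentDistrib (Y i n) (Y j n) μ μ)
    (C : ℝ) (hC : ∀ i n, ∫ ω, (Y i n ω) ^ 2 ∂μ ≤ C)
    (hsum2 : ∀ n k, ∫ ω, (∑ i ∈ Finset.range k, Y i n ω) ^ 2 ∂μ ≤ k * C)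
    (hindep : ∀ n, Indep (MeasurableSpace.comap (X n) inferInstance)
      (⨆ i, MeasurableSpace.comap (Y i n) inferInstance) μ) :
    ∀ᵐ ω ∂μ,
      (∃ c : ℝ, 0 < c ∧ ∀ᶠ n : ℕ in atTop, c * n ≤ Real.log (X n ω)) →
      Tendsto (fun n : ℕ => (∑ i ∈ Finset.range (X n ω), Y i n ω) / (X n ω))
        atTop (nhds 0) :=
  stmt12_general μ X hXmeas Y hYmeas hYsq C hsum2 hindep
end

section
/- The total progeny R of a Galton–Watson process with Poisson(α) offspring (α < 1), started from one individual, satisfies the Borel distribution: P(R = n) = e^{-αn}·(αn)^{n-1}/n! for n ≥ 1. -/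
/-!
Write `Po(β)` for the Poisson law. Given the generation sizes, the offspring counts of different
generations are independent, and the `m` individuals of a generation have `Po(m α)` children in
total. So the generation sizes `1, l₁, …, l_m, 0, 0, …` occur with probability
`Po(α){l₁} · Po(l₁ α){l₂} ⋯ Po(l_m α){0}`, and `P(R = n)` is the sum of these weights over all
compositions `(l₁, …, l_m)` of `n - 1`. Summing over the first block `j` gives a recursion for the
total weight `G(a, s)` of the compositions of `s` started from `a` individuals. The Borel–Tanner
numbers `a / (a + s) · Po((a + s) α){s}` satisfy the same recursion, by the identity
`∑ⱼ C(s, j) j x^j y^(s-j) = s x (x + y)^(s-1)`, and `a = 1`, `s = n - 1` is the Borel law.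
-/

open MeasureTheory ProbabilityTheory Finset
open scoped ENNReal NNReal Nat

namespace ProbabilityTheory

variable {Ω : Type*} [MeasurableSpace Ω] {P : Measure Ω}

lemma iIndepFun.curry {ι κ 𝓧 : Type*} [MeasurableSpace 𝓧] {X : ι → κ → Ω → 𝓧}
    (mX : ∀ i j, Measurable (X i j)) (h : iIndepFun (fun p : ι × κ ↦ X p.1 p.2) P) :
    iIndepFun (fun i ω j ↦ X i j ω) P := by
  have := h.isProbabilityMeasure
  have _ i j := Measure.isProbabilityMeasure_map (μ := P) (mX i j).aemeasurable
  have hrow i : P.map (fun ω j ↦ X i j ω) = Measure.infinitePi fun j ↦ P.map (X i j) :=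
    (h.precomp (Prod.mk_right_injective i)).map_fun_eq_infinitePi_map (mX i)
  have hmeas : Measurable fun ω (p : ι × κ) ↦ X p.1 p.2 ω := measurable_pi_iff.2 fun p ↦ mX p.1 p.2
  have hjoint : P.map (fun ω (p : ι × κ) ↦ X p.1 p.2 ω) =
      Measure.infinitePi fun p ↦ P.map (X p.1 p.2) :=
    h.map_fun_eq_infinitePi_map fun p ↦ mX p.1 p.2
  rw [iIndepFun_iff_map_fun_eq_infinitePi_map fun i ↦ measurable_pi_lambda _ (mX i)]
  calc P.map (fun ω i j ↦ X i j ω)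
      = (P.map fun ω (p : ι × κ) ↦ X p.1 p.2 ω).map (MeasurableEquiv.curry ι κ 𝓧) := by
        rw [Measure.map_map (by fun_prop) hmeas]; rfl
    _ = Measure.infinitePi fun i ↦ Measure.infinitePi fun j ↦ P.map (X i j) := by
        rw [hjoint]; exact Measure.infinitePi_map_curry fun i j ↦ P.map (X i j)
    _ = _ := by simp_rw [hrow]

lemma poissonMeasure_zero : poissonMeasure 0 = Measure.dirac 0 := by
  refine Measure.ext_iff_singleton.2 fun n ↦ ?_
  rcases n with _ | n <;> simp [poissonMeasure_singleton]

lemma hasLaw_poissonMeasure_iff {X : Ω → ℕ} (hX : Measurable X) {r : ℝ≥0} :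
    HasLaw X (poissonMeasure r) P ↔
      ∀ n, P {ω | X ω = n} = ENNReal.ofReal (Real.exp (-r) * r ^ n / n !) := by
  simp_rw [← poissonMeasure_singleton]
  refine ⟨fun h n ↦ h.measure_eq (measurableSet_singleton n), fun h ↦ ⟨hX.aemeasurable, ?_⟩⟩
  exact Measure.ext_iff_singleton.2 fun n ↦ by
    rw [Measure.map_apply hX (measurableSet_singleton n)]; exact h n

lemma hasLaw_sum_range_poissonMeasure {r : ℝ≥0} {X : ℕ → Ω → ℕ} (hX : iIndepFun X P)
    (mX : ∀ j, Measurable (X j)) (hlaw : ∀ j, HasLaw (X j) (poissonMeasure r) P) (m : ℕ) :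
    HasLaw (∑ j ∈ range m, X j) (poissonMeasure (m * r)) P := by
  induction m with
  | zero =>
    have := hX.isProbabilityMeasure
    simpa [poissonMeasure_zero] using hasLaw_dirac_of_ae_eq (P := P) (X := 0) (x := 0) (by rfl)
  | succ m ih =>
    rw [sum_range_succ, Nat.cast_succ, add_one_mul]
    exact (hX.indepFun_finsetSum_of_notMem mX notMem_range_self).hasLaw_add_poissonMeasure ih
      (hlaw m)

lemma measure_forall_sum_range_eq_prod {r : ℝ≥0} {ξ : ℕ → ℕ → Ω → ℕ}
    (mξ : ∀ k j, Measurable (ξ k j)) (hξ : iIndepFun (fun p : ℕ × ℕ ↦ ξ p.1 p.2) P)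
    (hlaw : ∀ k j, HasLaw (ξ k j) (poissonMeasure r) P) (M T : ℕ → ℕ) (K : ℕ) :
    P {ω | ∀ k < K, ∑ j ∈ range (M k), ξ k j ω = T k} =
      ∏ k ∈ range K, poissonMeasure (M k * r) {T k} := by
  have hsums : iIndepFun (fun k ω ↦ ∑ j ∈ range (M k), ξ k j ω) P :=
    (hξ.curry mξ).comp (fun k x ↦ ∑ j ∈ range (M k), x j)
      fun k ↦ Finset.measurable_sum _ fun j _ ↦ measurable_pi_apply j
  have hset : {ω | ∀ k < K, ∑ j ∈ range (M k), ξ k j ω = T k} =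
      ⋂ k ∈ range K, (fun ω ↦ ∑ j ∈ range (M k), ξ k j ω) ⁻¹' {T k} := by
    ext ω; simp
  rw [hset, hsums.meas_biInter fun k _ ↦ ⟨{T k}, measurableSet_singleton _, rfl⟩]
  refine prod_congr rfl fun k _ ↦ ?_
  have hk := hasLaw_sum_range_poissonMeasure (hξ.precomp (Prod.mk_right_injective k)) (mξ k)
    (hlaw k) (M k)
  simpa [Set.preimage] using hk.measure_eq (p := (· = T k)) (measurableSet_singleton _)

end ProbabilityTheory

theorem sum_range_choose_mul_mul_pow {R : Type*} [CommSemiring R] (x y : R) (s : ℕ) :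
    ∑ j ∈ range (s + 1), s.choose j * j * x ^ j * y ^ (s - j) = s * x * (x + y) ^ (s - 1) := by
  rcases s with _ | m
  · simp
  rw [sum_range_succ', Nat.add_sub_cancel, add_pow x y m, mul_sum]
  simp only [Nat.cast_zero, mul_zero, zero_mul, add_zero]
  refine sum_congr rfl fun i _ ↦ ?_
  rw [Nat.add_sub_add_right, ← Nat.cast_mul, ← Nat.add_one_mul_choose_eq]
  push_cast
  ring

namespace GaltonWatson

/-- Starting from `a` individuals, the probability that the total progeny of all later
generations is `s`. -/
noncomputable def borelTanner (β : ℝ) (a s : ℕ) : ℝ :=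
  a / (a + s) * (Real.exp (-((a + s) * β)) * ((a + s) * β) ^ s / s !)

lemma borelTanner_nonneg {β : ℝ} (hβ : 0 ≤ β) (a s : ℕ) : 0 ≤ borelTanner β a s := by
  unfold borelTanner; positivity

lemma borelTanner_zero (β : ℝ) {a : ℕ} (ha : a ≠ 0) :
    borelTanner β a 0 = Real.exp (-(a * β)) := by
  simp [borelTanner, ha]

lemma borelTanner_eq_sum (β : ℝ) (a : ℕ) {s : ℕ} (hs : 0 < s) :
    borelTanner β a s =
      ∑ j ∈ Icc 1 s, Real.exp (-(a * β)) * (a * β) ^ j / j ! * borelTanner β j (s - j) := by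
  have hs0 : (s : ℝ) ≠ 0 := by positivity
  set c := Real.exp (-((a + s) * β)) * β ^ s / (s * s !)
  have hterm : ∀ j ∈ Icc 1 s,
      Real.exp (-(a * β)) * (a * β) ^ j / j ! * borelTanner β j (s - j) =
        c * (s.choose j * j * (a : ℝ) ^ j * (s : ℝ) ^ (s - j)) := by
    intro j hj
    have hjs : j ≤ s := (mem_Icc.1 hj).2
    have hsum : (j : ℝ) + (s - j : ℕ) = s := by rw [Nat.cast_sub hjs]; ring
    have hexp : Real.exp (-((a + s) * β)) = Real.exp (-(a * β)) * Real.exp (-(s * β)) := by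
      rw [← Real.exp_add]; ring_nf
    have hpow : β ^ s = β ^ j * β ^ (s - j) := by rw [← pow_add, Nat.add_sub_cancel' hjs]
    simp only [borelTanner, c, hsum, Nat.cast_choose ℝ hjs, hexp, hpow]
    field_simp
    ring
  rw [sum_congr rfl hterm, ← mul_sum, sum_subset (fun j hj ↦ ?_) (fun j hj hj' ↦ ?_),
    sum_range_choose_mul_mul_pow]
  · have hpow : ((a : ℝ) + s) ^ s = (a + s) * (a + s) ^ (s - 1) := by
      rw [← pow_succ', Nat.sub_add_cancel hs]
    simp only [borelTanner, c]
    field_simp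
    rw [mul_pow, hpow]
    ring
  · simp only [mem_Icc, mem_range] at hj ⊢; omega
  · simp only [mem_Icc, mem_range] at hj hj'
    obtain rfl : j = 0 := by omega
    simp

lemma borelTanner_one (β : ℝ) {n : ℕ} (hn : 1 ≤ n) :
    borelTanner β 1 (n - 1) = Real.exp (-(β * n)) * (β * n) ^ (n - 1) / n ! := by
  have hcast : (1 : ℝ) + (n - 1 : ℕ) = n := by rw [Nat.cast_sub hn]; ring
  have hfact : (n ! : ℝ) = n * (n - 1)! := by
    rw [← Nat.cast_mul, Nat.mul_factorial_pred (by omega)]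
  have hn0 : (n : ℝ) ≠ 0 := by positivity
  simp only [borelTanner, Nat.cast_one, hcast, hfact]
  field_simp

def trajectory (a : ℕ) (l : List ℕ) (k : ℕ) : ℕ := (a :: l).getD k 0

@[simp] lemma trajectory_zero (a : ℕ) (l : List ℕ) : trajectory a l 0 = a := rfl

@[simp] lemma trajectory_nil_succ (a k : ℕ) : trajectory a [] (k + 1) = 0 := by
  simp [trajectory]

@[simp] lemma trajectory_cons_succ (a j : ℕ) (l : List ℕ) (k : ℕ) :
    trajectory a (j :: l) (k + 1) = trajectory j l k := rfl

lemma trajectory_eq_zero {a : ℕ} {l : List ℕ} {k : ℕ} (hk : l.length < k) :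
    trajectory a l k = 0 :=
  List.getD_eq_default _ _ (by simpa using hk)

lemma tsum_trajectory (a : ℕ) (l : List ℕ) :
    ∑' k, (trajectory a l k : ℝ≥0∞) = a + l.sum := by
  induction l generalizing a with
  | nil => rw [tsum_eq_zero_add' ENNReal.summable]; simp
  | cons j t ih => rw [tsum_eq_zero_add' ENNReal.summable]; simp [ih]

lemma eq_of_trajectory_eq {a : ℕ} {l l' : List ℕ} (hl : ∀ x ∈ l, 0 < x) (hl' : ∀ x ∈ l', 0 < x)
    (h : trajectory a l = trajectory a l') : l = l' := by
  induction l generalizing a l' with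
  | nil =>
    cases l' with
    | nil => rfl
    | cons y ys => exact absurd (by simpa using congrFun h 1) (hl' y (by simp)).ne
  | cons x xs ih =>
    cases l' with
    | nil => simpa [(hl x (by simp)).ne'] using congrFun h 1
    | cons y ys =>
      obtain rfl : x = y := by simpa using congrFun h 1
      rw [ih (fun z hz ↦ hl z (by simp [hz])) (fun z hz ↦ hl' z (by simp [hz]))
        (funext fun k ↦ congrFun h (k + 1))]

lemma forall_eq_trajectory_iff {z : ℕ → ℕ} {F : ℕ → ℕ → ℕ} (hF : ∀ k, F k 0 = 0)
    (hz : ∀ k, z (k + 1) = F k (z k)) (a : ℕ) (l : List ℕ) (hz0 : z 0 = a) :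
    (∀ k, z k = trajectory a l k) ↔
      ∀ k < l.length + 1, F k (trajectory a l k) = trajectory a l (k + 1) := by
  refine ⟨fun h k _ ↦ by rw [← h, ← h, hz], fun h k ↦ ?_⟩
  induction k with
  | zero => exact hz0
  | succ k ih =>
    rw [hz, ih]
    rcases lt_or_ge k (l.length + 1) with hk | hk
    · exact h k hk
    · rw [trajectory_eq_zero (by omega), trajectory_eq_zero (by omega), hF]

lemma eq_zero_of_le {z : ℕ → ℕ} (hz : ∀ k, z k = 0 → z (k + 1) = 0) {m k : ℕ} (hm : z m = 0)
    (hmk : m ≤ k) : z k = 0 := by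
  induction k, hmk using Nat.le_induction with
  | base => exact hm
  | succ k _ ih => exact hz k ih

lemma exists_eq_trajectory {z : ℕ → ℕ} (hz : ∀ k, z k = 0 → z (k + 1) = 0) {N : ℕ}
    (hN : z N = 0) : ∃ l : List ℕ, (∀ x ∈ l, 0 < x) ∧ z = trajectory (z 0) l := by
  induction N generalizing z with
  | zero => exact ⟨[], by simp, funext fun k ↦ by cases k <;> simp [eq_zero_of_le hz hN]⟩
  | succ N ih =>
    obtain ⟨l, hl, hzl⟩ := ih (z := fun k ↦ z (k + 1)) (fun k ↦ hz (k + 1)) hN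
    by_cases h1 : z 1 = 0
    · refine ⟨[], by simp, funext fun k ↦ ?_⟩
      cases k with
      | zero => rfl
      | succ k => simp [eq_zero_of_le hz h1 (Nat.le_add_left 1 k)]
    · refine ⟨z 1 :: l, by simpa [Nat.pos_iff_ne_zero, h1] using hl, funext fun k ↦ ?_⟩
      cases k with
      | zero => rfl
      | succ k => exact congrFun hzl k

def compositionLists (s : ℕ) : Set (List ℕ) := {l | (∀ x ∈ l, 0 < x) ∧ l.sum = s}

lemma cons_mem_compositionLists {j s : ℕ} {t : List ℕ} :
    j :: t ∈ compositionLists s ↔ j ∈ Icc 1 s ∧ t ∈ compositionLists (s - j) := by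
  simp only [compositionLists, Set.mem_ofPred_eq, List.forall_mem_cons, List.sum_cons, mem_Icc]
  exact ⟨fun ⟨⟨hj, ht⟩, hs⟩ ↦ ⟨⟨hj, by omega⟩, ht, by omega⟩,
    fun ⟨⟨hj, hjs⟩, ht, hs⟩ ↦ ⟨⟨hj, ht⟩, by omega⟩⟩

lemma tsum_eq_iff_exists_trajectory {z : ℕ → ℕ} (hz0 : z 0 = 1)
    (hz : ∀ k, z k = 0 → z (k + 1) = 0) {n : ℕ} (hn : 1 ≤ n) :
    ∑' k, (z k : ℝ≥0∞) = n ↔ ∃ l ∈ compositionLists (n - 1), z = trajectory 1 l := by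
  have hcast (m : ℕ) : ((1 : ℕ) : ℝ≥0∞) + m = n ↔ m = n - 1 := by
    rw [← Nat.cast_add, Nat.cast_inj]; omega
  refine ⟨fun h ↦ ?_, fun ⟨l, ⟨_, hsum⟩, hzl⟩ ↦ by rw [hzl, tsum_trajectory, hcast, hsum]⟩
  obtain ⟨N, hN⟩ : ∃ N, z N = 0 := by
    by_contra! hpos
    have htop : ∑' k, (z k : ℝ≥0∞) = ⊤ := top_unique <|
      (ENNReal.tsum_const_eq_top_of_ne_zero one_ne_zero).ge.trans <|
        ENNReal.tsum_le_tsum fun k ↦ by exact_mod_cast Nat.one_le_iff_ne_zero.2 (hpos k)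
    simp [h] at htop
  obtain ⟨l, hl, hzl⟩ := exists_eq_trajectory hz hN
  rw [hz0] at hzl
  rw [hzl, tsum_trajectory, hcast] at h
  exact ⟨l, ⟨hl, h⟩, hzl⟩

/-- The probability, given `a` individuals now, that the next generations have the sizes in `l`
and then die out. -/
noncomputable def pathWeight (r : ℝ≥0) : ℕ → List ℕ → ℝ≥0∞
  | a, [] => poissonMeasure (a * r) {0}
  | a, j :: t => poissonMeasure (a * r) {j} * pathWeight r j t

lemma prod_range_trajectory (r : ℝ≥0) (a : ℕ) (l : List ℕ) :
    ∏ k ∈ range (l.length + 1), poissonMeasure (trajectory a l k * r) {trajectory a l (k + 1)} =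
      pathWeight r a l := by
  induction l generalizing a with
  | nil => simp [pathWeight]
  | cons j t ih =>
    rw [List.length_cons, prod_range_succ']
    simp only [trajectory_cons_succ, ih, zero_add, trajectory_zero]
    rw [mul_comm]; rfl

noncomputable def totalWeight (r : ℝ≥0) (a s : ℕ) : ℝ≥0∞ :=
  ∑' l, (compositionLists s).indicator (pathWeight r a) l

lemma totalWeight_zero (r : ℝ≥0) (a : ℕ) : totalWeight r a 0 = poissonMeasure (a * r) {0} := by
  have hnil : ∀ l ∈ compositionLists 0, l = [] := fun l ⟨hpos, hsum⟩ ↦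
    List.eq_nil_iff_forall_not_mem.2 fun x hx ↦ (hpos x hx).ne' (List.sum_eq_zero_iff.1 hsum x hx)
  rw [totalWeight, tsum_eq_single [] fun l hl ↦ Set.indicator_of_notMem (mt (hnil l) hl) _]
  simp [compositionLists, pathWeight]

lemma tsum_list_eq_tsum_tsum_cons {α : Type*} {f : List α → ℝ≥0∞} (hf : f [] = 0) :
    ∑' l, f l = ∑' (j) (t), f (j :: t) := by
  rw [← ENNReal.tsum_prod (f := fun j t ↦ f (j :: t))]
  refine (Function.Injective.tsum_eq (fun p q h ↦ ?_) fun l hl ↦ ?_).symm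
  · simpa [Prod.ext_iff] using h
  · cases l with
    | nil => exact absurd hf hl
    | cons j t => exact ⟨(j, t), rfl⟩

lemma totalWeight_of_pos (r : ℝ≥0) (a : ℕ) {s : ℕ} (hs : 0 < s) :
    totalWeight r a s = ∑ j ∈ Icc 1 s, poissonMeasure (a * r) {j} * totalWeight r j (s - j) := by
  have hcons (j : ℕ) (t : List ℕ) : (compositionLists s).indicator (pathWeight r a) (j :: t) =
      (Icc 1 s : Set ℕ).indicator (fun j ↦ poissonMeasure (a * r) {j} *
        (compositionLists (s - j)).indicator (pathWeight r j) t) j := by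
    classical
    simp only [Set.indicator_apply, cons_mem_compositionLists, pathWeight, coe_Icc, Set.mem_Icc,
      mem_Icc]
    split_ifs <;> simp_all
  rw [totalWeight, tsum_list_eq_tsum_tsum_cons (by simp [compositionLists]; omega),
    sum_eq_tsum_indicator]
  refine tsum_congr fun j ↦ ?_
  simp_rw [hcons]
  by_cases hj : j ∈ Icc 1 s
  · simp only [Set.indicator_of_mem (mem_coe.2 hj), ENNReal.tsum_mul_left, totalWeight]
  · simp only [Set.indicator_of_notMem (mt mem_coe.1 hj), tsum_zero]

lemma totalWeight_eq_borelTanner (r : ℝ≥0) (s : ℕ) {a : ℕ} (ha : a ≠ 0) :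
    totalWeight r a s = ENNReal.ofReal (borelTanner r a s) := by
  induction s using Nat.strong_induction_on generalizing a with
  | _ s ih =>
    rcases Nat.eq_zero_or_pos s with rfl | hs
    · simp [totalWeight_zero, poissonMeasure_singleton, borelTanner_zero _ ha]
    rw [totalWeight_of_pos r a hs, borelTanner_eq_sum _ _ hs, ENNReal.ofReal_sum_of_nonneg]
    · refine sum_congr rfl fun j hj ↦ ?_
      obtain ⟨hj1, hjs⟩ := mem_Icc.1 hj
      rw [ih (s - j) (by omega) (by omega), poissonMeasure_singleton,
        ← ENNReal.ofReal_mul (by positivity)]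
      push_cast
      rfl
    · intro j _
      exact mul_nonneg (by positivity) (borelTanner_nonneg r.2 j _)

end GaltonWatson

open GaltonWatson

theorem stmt16_general {Ω : Type*} [MeasurableSpace Ω] (μ : Measure Ω)
    (α : ℝ) (hα0 : 0 < α)
    (ξ : ℕ → ℕ → Ω → ℕ) (hξmeas : ∀ n j, Measurable (ξ n j))
    (hiid : iIndepFun (fun p : ℕ × ℕ => ξ p.1 p.2) μ)
    (hpois : ∀ n j k, μ {ω | ξ n j ω = k} =
      ENNReal.ofReal (Real.exp (-α) * α ^ k / (Nat.factorial k)))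
    (Z : ℕ → Ω → ℕ) (hZ0 : ∀ ω, Z 0 ω = 1)
    (hZrec : ∀ n ω, Z (n + 1) ω = ∑ j ∈ Finset.range (Z n ω), ξ n j ω) :
    ∀ n : ℕ, 1 ≤ n →
      μ {ω | (∑' k, (Z k ω : ℝ≥0∞)) = (n : ℝ≥0∞)} =
        ENNReal.ofReal (Real.exp (-(α * n)) * (α * n) ^ (n - 1) / (Nat.factorial n)) := by
  intro n hn
  set r : ℝ≥0 := ⟨α, hα0.le⟩
  have hlaw k j : HasLaw (ξ k j) (poissonMeasure r) μ :=
    (hasLaw_poissonMeasure_iff (hξmeas k j)).2 (hpois k j)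
  have hE (l : List ℕ) : {ω | ∀ k, Z k ω = trajectory 1 l k} =
      {ω | ∀ k < l.length + 1, ∑ j ∈ range (trajectory 1 l k), ξ k j ω = trajectory 1 l (k + 1)} :=
    Set.ext fun ω ↦ forall_eq_trajectory_iff (F := fun k m ↦ ∑ j ∈ range m, ξ k j ω) (by simp)
      (hZrec · ω) 1 l (hZ0 ω)
  have hevent : {ω | ∑' k, (Z k ω : ℝ≥0∞) = n} =
      ⋃ l ∈ compositionLists (n - 1), {ω | ∀ k, Z k ω = trajectory 1 l k} := by
    ext ω
    simp only [Set.mem_ofPred_eq, Set.mem_iUnion, exists_prop, ← funext_iff]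
    exact tsum_eq_iff_exists_trajectory (hZ0 ω) (fun k h ↦ by simp [hZrec, h]) hn
  have hdisj : (compositionLists (n - 1)).PairwiseDisjoint
      fun l ↦ {ω | ∀ k, Z k ω = trajectory 1 l k} := fun l hl l' hl' hne ↦
    Set.disjoint_left.2 fun ω h h' ↦ hne <| eq_of_trajectory_eq hl.1 hl'.1 <|
      funext fun k ↦ (h k).symm.trans (h' k)
  rw [hevent, measure_biUnion (Set.to_countable _) hdisj fun l _ ↦ by
    rw [hE]; exact measurableSet_setOfPred.2 (by fun_prop)]
  simp_rw [hE, measure_forall_sum_range_eq_prod hξmeas hiid hlaw, prod_range_trajectory]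
  rw [_root_.tsum_subtype (compositionLists (n - 1)) (pathWeight r 1), ← totalWeight,
    totalWeight_eq_borelTanner r _ one_ne_zero, borelTanner_one _ hn]
  rfl

/-- The total progeny `R` of a Galton–Watson process with `Poisson α`
offspring (`α < 1`), started from one individual, follows the Borel distribution:
`P(R = n) = e^{-αn}·(αn)^{n-1}/n!` for `n ≥ 1`. -/
theorem stmt16 {Ω : Type*} [MeasurableSpace Ω] (μ : Measure Ω) [IsProbabilityMeasure μ]
    (α : ℝ) (hα0 : 0 < α) (hα1 : α < 1)
    (ξ : ℕ → ℕ → Ω → ℕ) (hξmeas : ∀ n j, Measurable (ξ n j))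
    (hiid : iIndepFun (fun p : ℕ × ℕ => ξ p.1 p.2) μ)
    (hpois : ∀ n j k, μ {ω | ξ n j ω = k} =
      ENNReal.ofReal (Real.exp (-α) * α ^ k / (Nat.factorial k)))
    (Z : ℕ → Ω → ℕ) (hZ0 : ∀ ω, Z 0 ω = 1)
    (hZrec : ∀ n ω, Z (n + 1) ω = ∑ j ∈ Finset.range (Z n ω), ξ n j ω) :
    ∀ n : ℕ, 1 ≤ n →
      μ {ω | (∑' k, (Z k ω : ℝ≥0∞)) = (n : ℝ≥0∞)} =
        ENNReal.ofReal (Real.exp (-(α * n)) * (α * n) ^ (n - 1) / (Nat.factorial n)) :=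
  stmt16_general μ α hα0 ξ hξmeas hiid hpois Z hZ0 hZrec
end

section
/- Let (m_n) be a positive sequence with liminf_{n→∞} m_{n+1}/m_n > 1, let c > 0, and let (v_n) be a positive sequence with v_n/m_n → c. Define u_t = inf{n : m_n ≥ t} and w_t = inf{n : v_n ≥ t}. Then sup_{t≥t_0} |w_t - u_t| < ∞ for some t_0, i.e., the difference of the generalized inverse functions is eventually bounded. -/
open Filter

/-- Let `(m n)` be a positive sequence with `liminf m (n+1)/m n > 1`
(expressed by its eventual-bound characterization), `c > 0`, and `(v n)` a positive
sequence with `v n / m n → c`. With the generalized inverses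
`u t = inf {n | m n ≥ t}` and `w t = inf {n | v n ≥ t}`, the difference `|w t - u t|`
is eventually bounded. -/
theorem stmt18 (m v : ℕ → ℝ) (hm : ∀ n, 0 < m n) (hv : ∀ n, 0 < v n)
    (hratio : ∃ l : ℝ, 1 < l ∧ ∀ᶠ n : ℕ in atTop, l * m n ≤ m (n + 1))
    (c : ℝ) (hc : 0 < c)
    (hvc : Tendsto (fun n : ℕ => v n / m n) atTop (nhds c))
    (u w : ℝ → ℕ)
    (hu : ∀ t : ℝ, u t = sInf {n : ℕ | t ≤ m n})
    (hw : ∀ t : ℝ, w t = sInf {n : ℕ | t ≤ v n}) :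
    ∃ t₀ C : ℝ, ∀ t : ℝ, t₀ ≤ t → |((w t : ℝ)) - ((u t : ℝ))| ≤ C := by
  obtain ⟨l, hl, hev⟩ := hratio
  have hl0 : 0 < l := lt_trans one_pos hl
  obtain ⟨N0, hN0⟩ := eventually_atTop.1 hev
  -- ratio bounds
  obtain ⟨Nr, hNr⟩ := Metric.tendsto_atTop.1 hvc (c / 2) (by positivity)
  set N1 := max N0 Nr with hN1def
  have hlow : ∀ n, N1 ≤ n → c / 2 * m n ≤ v n := by
    intro n hn
    have h := hNr n (le_trans (le_max_right _ _) hn)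
    rw [Real.dist_eq, abs_lt] at h
    have hmn := hm n
    have : c / 2 ≤ v n / m n := by linarith [h.1]
    calc c / 2 * m n ≤ v n / m n * m n := by nlinarith
    _ = v n := by field_simp
  have hhigh : ∀ n, N1 ≤ n → v n ≤ 3 * c / 2 * m n := by
    intro n hn
    have h := hNr n (le_trans (le_max_right _ _) hn)
    rw [Real.dist_eq, abs_lt] at h
    have hmn := hm n
    have : v n / m n ≤ 3 * c / 2 := by linarith [h.2]
    calc v n = v n / m n * m n := by field_simp
    _ ≤ 3 * c / 2 * m n := by nlinarith
  -- geometric growth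
  have geom : ∀ a, N0 ≤ a → ∀ j, l ^ j * m a ≤ m (a + j) := by
    intro a ha j
    induction j with
    | zero => simp
    | succ j ih =>
      have h1 := hN0 (a + j) (le_trans ha (Nat.le_add_right _ _))
      calc l ^ (j + 1) * m a = l * (l ^ j * m a) := by ring
      _ ≤ l * m (a + j) := by nlinarith
      _ ≤ m (a + j + 1) := h1
  have hlpow : Tendsto (fun j : ℕ => l ^ j) atTop atTop :=
    tendsto_pow_atTop_atTop_of_one_lt hl
  have hm_top : Tendsto m atTop atTop := by
    have h1 : Tendsto (fun j : ℕ => l ^ j * m N0) atTop atTop :=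
      hlpow.atTop_mul_const (hm N0)
    have h2 : Tendsto (fun j : ℕ => m (j + N0)) atTop atTop := by
      apply tendsto_atTop_mono (fun j => ?_) h1
      have := geom N0 le_rfl j
      rwa [Nat.add_comm] at this
    exact (tendsto_add_atTop_iff_nat N0).1 h2
  have hv_top : Tendsto v atTop atTop := by
    apply tendsto_atTop_mono' atTop (eventually_atTop.2 ⟨N1, hlow⟩)
    exact hm_top.const_mul_atTop (by positivity)
  -- pick k
  obtain ⟨k, hk⟩ := (tendsto_atTop.1 hlpow (max (2 / c) (3 * c / 2))).exists
  have hk1 : 2 / c ≤ l ^ k := le_trans (le_max_left _ _) hk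
  have hk2 : 3 * c / 2 ≤ l ^ k := le_trans (le_max_right _ _) hk
  -- threshold t₀
  set S := ∑ n ∈ Finset.range N1, (m n + v n) with hS
  have hS0 : 0 ≤ S := Finset.sum_nonneg fun n _ => by
    have := hm n; have := hv n; linarith
  refine ⟨1 + S, (k : ℝ), fun t ht => ?_⟩
  have ht1 : (1 : ℝ) ≤ t := by linarith
  have ht0 : 0 < t := lt_of_lt_of_le one_pos ht1
  have hbound : ∀ j, j < N1 → m j < t ∧ v j < t := by
    intro j hj
    have hle : m j + v j ≤ S :=
      Finset.single_le_sum (f := fun n => m n + v n)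
        (fun n _ => by show (0:ℝ) ≤ m n + v n; have := hm n; have := hv n; linarith) (Finset.mem_range.2 hj)
    constructor <;> nlinarith [hm j, hv j]
  -- membership facts
  have hune : {n : ℕ | t ≤ m n}.Nonempty := (tendsto_atTop.1 hm_top t).exists
  have hwne : {n : ℕ | t ≤ v n}.Nonempty := (tendsto_atTop.1 hv_top t).exists
  have humem : t ≤ m (u t) := by
    have := Nat.sInf_mem hune; rw [← hu t] at this; exact this
  have hwmem : t ≤ v (w t) := by
    have := Nat.sInf_mem hwne; rw [← hw t] at this; exact this
  have huN : N1 ≤ u t := by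
    by_contra h
    exact absurd humem (not_le.2 (hbound (u t) (not_le.1 h)).1)
  have hwN : N1 ≤ w t := by
    by_contra h
    exact absurd hwmem (not_le.2 (hbound (w t) (not_le.1 h)).2)
  have huN0 : N0 ≤ u t := le_trans (le_max_left _ _) huN
  have hwN0 : N0 ≤ w t := le_trans (le_max_left _ _) hwN
  -- step 1 : w t ≤ u t + k
  have hstep1 : w t ≤ u t + k := by
    have hg := geom (u t) huN0 k
    have hl1 : c / 2 * m (u t + k) ≤ v (u t + k) :=
      hlow _ (le_trans huN (Nat.le_add_right _ _))
    have hmk : 0 < m (u t) := hm (u t)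
    have hck : 1 ≤ c / 2 * l ^ k := by
      have h := mul_le_mul_of_nonneg_left hk1 (le_of_lt (half_pos hc))
      have he : c / 2 * (2 / c) = 1 := by field_simp
      linarith
    have h1 : t ≤ v (u t + k) := by
      nlinarith [mul_le_mul_of_nonneg_right hck (le_of_lt hmk),
        mul_le_mul_of_nonneg_left hg (le_of_lt (half_pos hc))]
    rw [hw t]
    exact Nat.sInf_le h1
  -- step 2 : u t ≤ w t + k
  have hstep2 : u t ≤ w t + k := by
    have hg := geom (w t) hwN0 k
    have hh : v (w t) ≤ 3 * c / 2 * m (w t) := hhigh _ hwN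
    have hmk : 0 < m (w t) := hm (w t)
    have h1 : t ≤ m (w t + k) := by
      nlinarith [mul_le_mul_of_nonneg_right hk2 (le_of_lt hmk)]
    rw [hu t]
    exact Nat.sInf_le h1
  have h1 : (w t : ℝ) ≤ (u t : ℝ) + k := by exact_mod_cast hstep1
  have h2 : (u t : ℝ) ≤ (w t : ℝ) + k := by exact_mod_cast hstep2
  rw [abs_le]
  constructor <;> linarith
end

section
/- Let (Z_n) be the aging branching process with non-decreasing ages a_{n+1} ≤ a_n + 1 and offspring mean m. Then M_n = (m+1)^{-n}·Z_n is a non-negative supermartingale with respect to the natural filtration, hence converges almost surely to a finite non-negative random variable. -/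
open MeasureTheory ProbabilityTheory Filter

/-!
Given `ℱ n`, the newborns `Z (n+1) 0` are a sum of `Z n` offspring counts of mean `m`
independent of `ℱ n`; splitting according to the value of `Z n` shows that their conditional
mean is `m * Z n`. The survivors `∑_{b < a (n+1)} Z n b` are `ℱ n`-measurable and, since
`a (n+1) ≤ a n + 1`, at most `Z n`. Hence `E[Z (n+1) | ℱ n] ≤ (m + 1) Z n`, so
`(m+1)^{-n} Z n` is a nonnegative supermartingale; it is bounded in `L¹` by its initial mean,
and Doob's convergence theorem applies.
-/

theorem Finset.sum_range_succ_eq_of_shift {M : Type*} [AddCommMonoid M] {k : ℕ} {y y' : ℕ → M}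
    (hshift : ∀ b, 1 ≤ b → y' b = if b ≤ k then y (b - 1) else 0) :
    ∑ b ∈ Finset.range (k + 1), y' b = ∑ b ∈ Finset.range k, y b + y' 0 := by
  rw [Finset.sum_range_succ']
  congr 1
  refine Finset.sum_congr rfl fun b hb => ?_
  rw [hshift (b + 1) b.succ_pos, if_pos (show b + 1 ≤ k from Finset.mem_range.1 hb),
    Nat.add_sub_cancel]

namespace MeasureTheory

variable {Ω : Type*} {mΩ : MeasurableSpace Ω} {μ : Measure Ω}

theorem setIntegral_eq_of_forall_setIntegral_inter_fiber_eq {N : Ω → ℕ} (hN : Measurable N)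
    {f g : Ω → ℝ} (hf : Integrable f μ) (hg : Integrable g μ) {A : Set Ω} (hA : MeasurableSet A)
    (h : ∀ k, ∫ ω in A ∩ N ⁻¹' {k}, f ω ∂μ = ∫ ω in A ∩ N ⁻¹' {k}, g ω ∂μ) :
    ∫ ω in A, f ω ∂μ = ∫ ω in A, g ω ∂μ := by
  have hmeas : ∀ k, MeasurableSet (A ∩ N ⁻¹' {k}) := fun k => hA.inter (hN (.singleton k))
  have hdisj : Pairwise (Function.onFun Disjoint fun k => A ∩ N ⁻¹' {k}) :=
    (pairwise_disjoint_fiber N).mono fun _ _ h => h.mono Set.inter_subset_right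
      Set.inter_subset_right
  have hcover : (⋃ k, A ∩ N ⁻¹' {k}) = A := by
    rw [← Set.inter_iUnion, ← Set.preimage_iUnion, Set.iUnion_singleton_eq_range,
      Set.range_id', Set.preimage_univ, Set.inter_univ]
  have hsum (F : Ω → ℝ) (hF : Integrable F μ) :
      HasSum (fun k => ∫ ω in A ∩ N ⁻¹' {k}, F ω ∂μ) (∫ ω in A, F ω ∂μ) := by
    simpa only [hcover] using hasSum_integral_iUnion hmeas hdisj hF.integrableOn
  exact (hsum f hf).unique (funext h ▸ hsum g hg)

variable [IsFiniteMeasure μ]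

theorem condExp_add_le_of_le {𝒢 : MeasurableSpace Ω} (h𝒢 : 𝒢 ≤ mΩ) {W S Y : Ω → ℝ} {c : ℝ}
    (hW : StronglyMeasurable[𝒢] W) (hWint : Integrable W μ) (hSint : Integrable S μ)
    (hWY : W ≤ Y) (hS : μ[S | 𝒢] =ᵐ[μ] c • Y) : μ[W + S | 𝒢] ≤ᵐ[μ] (c + 1) • Y := by
  filter_upwards [condExp_add hWint hSint 𝒢, hS] with ω hadd hω
  rw [hadd, Pi.add_apply, condExp_of_stronglyMeasurable h𝒢 hW hWint, hω]
  simpa [add_mul, add_comm] using hWY ω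

theorem supermartingale_inv_pow_smul_of_condExp_le {ℱ : Filtration ℕ mΩ} {X : ℕ → Ω → ℝ}
    {c : ℝ} (hc : 0 < c) (hadp : StronglyAdapted ℱ X) (hint : ∀ n, Integrable (X n) μ)
    (hstep : ∀ n, μ[X (n + 1) | ℱ n] ≤ᵐ[μ] c • X n) :
    Supermartingale (fun n => (c ^ n)⁻¹ • X n) ℱ μ := by
  refine supermartingale_nat (fun n => (hadp n).const_smul _) (fun n => (hint n).smul _)
    fun n => ?_
  filter_upwards [condExp_smul (c ^ (n + 1))⁻¹ (X (n + 1)) (ℱ n), hstep n] with ω hsmul hω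
  rw [hsmul, Pi.smul_apply, Pi.smul_apply, smul_eq_mul, smul_eq_mul, pow_succ, mul_inv,
    mul_assoc]
  refine mul_le_mul_of_nonneg_left ?_ (by positivity)
  rw [inv_mul_le_iff₀ hc]
  exact hω

theorem Supermartingale.exists_ae_tendsto_of_nonneg {ℱ : Filtration ℕ mΩ} {f : ℕ → Ω → ℝ}
    (hf : Supermartingale f ℱ μ) (hnonneg : ∀ n, 0 ≤ᵐ[μ] f n) :
    ∃ L : Ω → ℝ, (∀ᵐ ω ∂μ, 0 ≤ L ω) ∧
      ∀ᵐ ω ∂μ, Tendsto (fun n => f n ω) atTop (nhds (L ω)) := by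
  have hbdd (n : ℕ) : eLpNorm ((-f) n) 1 μ ≤ (∫ ω, f 0 ω ∂μ).toNNReal := by
    rw [Pi.neg_apply, eLpNorm_neg, eLpNorm_one_eq_lintegral_enorm,
      ← ofReal_integral_norm_eq_lintegral_enorm (hf.integrable n),
      integral_congr_ae ((hnonneg n).mono fun ω h => Real.norm_of_nonneg h)]
    exact ENNReal.ofReal_le_ofReal
      (by simpa using hf.setIntegral_le (Nat.zero_le n) MeasurableSet.univ)
  have hlim : ∀ᵐ ω ∂μ, Tendsto (fun n => f n ω) atTop (nhds (limUnder atTop (f · ω))) := by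
    filter_upwards [hf.neg.exists_ae_tendsto_of_bdd hbdd] with ω ⟨c, hc⟩
    exact tendsto_nhds_limUnder ⟨-c, by simpa using hc.neg⟩
  refine ⟨fun ω => limUnder atTop (f · ω), ?_, hlim⟩
  filter_upwards [hlim, ae_all_iff.2 hnonneg] with ω hω h0
  exact ge_of_tendsto' hω h0

end MeasureTheory

namespace ProbabilityTheory

variable {Ω : Type*} {mΩ : MeasurableSpace Ω} {μ : Measure Ω} [IsProbabilityMeasure μ]
  {𝒢 𝒳 : MeasurableSpace Ω}

theorem setIntegral_eq_measureReal_mul_integral_of_indep (h𝒳 : 𝒳 ≤ mΩ) (h𝒢 : 𝒢 ≤ mΩ)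
    {X : Ω → ℝ} (hX : Measurable[𝒳] X) (hXint : Integrable X μ) (hindep : Indep 𝒳 𝒢 μ)
    {B : Set Ω} (hB : MeasurableSet[𝒢] B) :
    ∫ ω in B, X ω ∂μ = μ.real B * ∫ ω, X ω ∂μ := by
  rw [← setIntegral_condExp h𝒢 hXint hB,
    setIntegral_congr_ae (h𝒢 B hB) ((condExp_indep_eq h𝒳 h𝒢 hX.stronglyMeasurable hindep).mono
      fun _ h _ => h), setIntegral_const, smul_eq_mul]

theorem condExp_sum_range_eq_mul (h𝒳 : 𝒳 ≤ mΩ) (h𝒢 : 𝒢 ≤ mΩ) {X : ℕ → Ω → ℝ}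
    (hX : ∀ j, Measurable[𝒳] (X j)) (hXint : ∀ j, Integrable (X j) μ) {c : ℝ}
    (hXmean : ∀ j, ∫ ω, X j ω ∂μ = c) (hindep : Indep 𝒳 𝒢 μ) {N : Ω → ℕ}
    (hN : Measurable[𝒢] N) (hNint : Integrable (fun ω => (N ω : ℝ)) μ)
    (hSint : Integrable (fun ω => ∑ j ∈ Finset.range (N ω), X j ω) μ) :
    μ[fun ω => ∑ j ∈ Finset.range (N ω), X j ω | 𝒢] =ᵐ[μ] fun ω => c * N ω := by
  refine (ae_eq_condExp_of_forall_setIntegral_eq h𝒢 hSint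
    (fun _ _ _ => (hNint.const_mul c).integrableOn) (fun A hA _ => ?_)
    ((Measurable.of_discrete.comp hN).const_mul c).aestronglyMeasurable).symm
  refine setIntegral_eq_of_forall_setIntegral_inter_fiber_eq (hN.mono h𝒢 le_rfl)
    (hNint.const_mul c) hSint (h𝒢 A hA) fun k => ?_
  have hB : MeasurableSet[𝒢] (A ∩ N ⁻¹' {k}) := hA.inter (hN (.singleton k))
  calc ∫ ω in A ∩ N ⁻¹' {k}, c * N ω ∂μ = ∫ _ in A ∩ N ⁻¹' {k}, c * k ∂μ :=
        setIntegral_congr_fun (h𝒢 _ hB) fun ω hω => by rw [hω.2]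
    _ = ∑ j ∈ Finset.range k, ∫ ω in A ∩ N ⁻¹' {k}, X j ω ∂μ := by
        simp only [setIntegral_const, smul_eq_mul,
          setIntegral_eq_measureReal_mul_integral_of_indep h𝒳 h𝒢 (hX _) (hXint _) hindep hB,
          hXmean, Finset.sum_const, Finset.card_range, nsmul_eq_mul]
        ring
    _ = ∫ ω in A ∩ N ⁻¹' {k}, ∑ j ∈ Finset.range (N ω), X j ω ∂μ := by
        rw [← integral_finsetSum _ fun j _ => (hXint j).integrableOn]
        exact setIntegral_congr_fun (h𝒢 _ hB) fun ω hω => by rw [hω.2]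

/-- One generation of the aging branching process: `Y` and `Y'` are the age profiles at times
`n` and `n + 1`, with maximal ages `k` and `k'`, and `𝒢` is the information at time `n`. -/
theorem condExp_aging_step_le (h𝒢 : 𝒢 ≤ mΩ) {k k' : ℕ} (hk : k' ≤ k + 1) {m : ℝ}
    {R : ℕ → Ω → ℕ} (hRmeas : ∀ j, Measurable[mΩ] (R j))
    (hRint : ∀ j, Integrable (fun ω => (R j ω : ℝ)) μ) (hRmean : ∀ j, ∫ ω, (R j ω : ℝ) ∂μ = m)
    (hRindep : Indep (⨆ j, MeasurableSpace.comap (R j) inferInstance) 𝒢 μ)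
    {Y Y' : ℕ → Ω → ℕ} (hY : ∀ b, Measurable[𝒢] (Y b))
    (hYint : ∀ b, Integrable (fun ω => (Y b ω : ℝ)) μ)
    (hY'int : Integrable (fun ω => (Y' 0 ω : ℝ)) μ)
    (hshift : ∀ b, 1 ≤ b → ∀ ω, Y' b ω = if b ≤ k' then Y (b - 1) ω else 0)
    (hnew : ∀ ω, Y' 0 ω = ∑ j ∈ Finset.range (∑ b ∈ Finset.range (k + 1), Y b ω), R j ω) :
    μ[fun ω => ((∑ b ∈ Finset.range (k' + 1), Y' b ω : ℕ) : ℝ) | 𝒢]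
      ≤ᵐ[μ] (m + 1) • fun ω => ((∑ b ∈ Finset.range (k + 1), Y b ω : ℕ) : ℝ) := by
  set N : Ω → ℕ := fun ω => ∑ b ∈ Finset.range (k + 1), Y b ω
  have hN : Measurable[𝒢] N := Finset.measurable_sum _ fun b _ => hY b
  have hNint : Integrable (fun ω => (N ω : ℝ)) μ := by
    simpa only [N, Nat.cast_sum] using integrable_finsetSum _ fun b _ => hYint b
  have hsplit : (fun ω => ((∑ b ∈ Finset.range (k' + 1), Y' b ω : ℕ) : ℝ))
      = (fun ω => ∑ b ∈ Finset.range k', (Y b ω : ℝ)) + fun ω => (Y' 0 ω : ℝ) := by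
    ext ω
    rw [Finset.sum_range_succ_eq_of_shift (y := (Y · ω)) (hshift · · ω)]
    push_cast
    rfl
  have hnewborns : (fun ω => (Y' 0 ω : ℝ)) = fun ω => ∑ j ∈ Finset.range (N ω), (R j ω : ℝ) := by
    ext ω
    rw [hnew]
    push_cast
    rfl
  have hRmeas' (j : ℕ) : Measurable[⨆ j, MeasurableSpace.comap (R j) inferInstance]
      (fun ω => (R j ω : ℝ)) :=
    Measurable.of_discrete.comp
      ((comap_measurable (R j)).mono (le_iSup (fun j => MeasurableSpace.comap (R j) _) j) le_rfl)
  rw [hsplit]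
  refine condExp_add_le_of_le h𝒢
    (Finset.measurable_sum _ fun b _ => Measurable.of_discrete.comp (hY b)).stronglyMeasurable
    (integrable_finsetSum _ fun b _ => hYint b) hY'int (fun ω => ?_) ?_
  · push_cast
    exact Finset.sum_le_sum_of_subset_of_nonneg (Finset.range_subset_range.2 hk)
      fun _ _ _ => Nat.cast_nonneg _
  · rw [hnewborns] at hY'int ⊢
    exact condExp_sum_range_eq_mul (iSup_le fun j => (hRmeas j).comap_le) h𝒢 hRmeas' hRint
      hRmean hRindep hN hNint hY'int

end ProbabilityTheory

theorem stmt19_general {Ω : Type*} {mΩ : MeasurableSpace Ω} (μ : Measure Ω)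
    [IsProbabilityMeasure μ] (ℱ : Filtration ℕ mΩ)
    (m : ℝ) (hm : 0 < m)
    (a : ℕ → ℕ) (hstep : ∀ n, a (n + 1) ≤ a n + 1)
    (R : ℕ → ℕ → Ω → ℕ) (hRmeas : ∀ j n, Measurable (R j n))
    (hRid : ∀ j n, IdentDistrib (R j n) (R 0 0) μ μ)
    (hRint : Integrable (fun ω => (R 0 0 ω : ℝ)) μ)
    (hRmean : ∫ ω, (R 0 0 ω : ℝ) ∂μ = m)
    (hRindep : ∀ n, Indep
      (⨆ j, MeasurableSpace.comap (R j (n + 1)) inferInstance) (ℱ n) μ)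
    (Z : ℕ → ℕ → Ω → ℕ)
    (hZadapted : ∀ n b, Measurable[ℱ n] (Z n b))
    (hZint : ∀ n b, Integrable (fun ω => (Z n b ω : ℝ)) μ)
    (hshift : ∀ n b, 1 ≤ b → ∀ ω,
      Z (n + 1) b ω = if b ≤ a (n + 1) then Z n (b - 1) ω else 0)
    (hnew : ∀ n ω, Z (n + 1) 0 ω =
      ∑ j ∈ Finset.range (∑ b ∈ Finset.range (a n + 1), Z n b ω), R j (n + 1) ω)
    (M : ℕ → Ω → ℝ)
    (hM : ∀ n ω, M n ω =
      ((m + 1) ^ n)⁻¹ * ((∑ b ∈ Finset.range (a n + 1), Z n b ω : ℕ) : ℝ)) :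
    (∀ n ω, 0 ≤ M n ω) ∧ Supermartingale M ℱ μ ∧
      ∃ L : Ω → ℝ, (∀ᵐ ω ∂μ, 0 ≤ L ω) ∧
        ∀ᵐ ω ∂μ, Tendsto (fun n => M n ω) atTop (nhds (L ω)) := by
  set X : ℕ → Ω → ℝ := fun n ω => ((∑ b ∈ Finset.range (a n + 1), Z n b ω : ℕ) : ℝ)
  have hRcast (j n : ℕ) : IdentDistrib (fun ω => (R j n ω : ℝ)) (fun ω => (R 0 0 ω : ℝ)) μ μ :=
    (hRid j n).comp Measurable.of_discrete
  have hX : ∀ n, μ[X (n + 1) | ℱ n] ≤ᵐ[μ] (m + 1) • X n := fun n =>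
    condExp_aging_step_le (ℱ.le n) (hstep n) (hRmeas · (n + 1))
      (fun j => (hRcast j (n + 1)).integrable_iff.2 hRint)
      (fun j => (hRcast j (n + 1)).integral_eq.trans hRmean) (hRindep n) (hZadapted n)
      (hZint n) (hZint (n + 1) 0) (hshift n) (hnew n)
  have hXint (n : ℕ) : Integrable (X n) μ := by
    simpa only [X, Nat.cast_sum] using integrable_finsetSum _ fun b _ => hZint n b
  have hMX : M = fun n => ((m + 1) ^ n)⁻¹ • X n := funext fun n => funext (hM n)
  have hsuper : Supermartingale M ℱ μ := hMX ▸ supermartingale_inv_pow_smul_of_condExp_le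
    (by linarith) (fun n => (Measurable.of_discrete.comp
      (Finset.measurable_sum _ fun b _ => hZadapted n b)).stronglyMeasurable) hXint hX
  have hnonneg (n : ℕ) (ω : Ω) : 0 ≤ M n ω := by
    rw [hM]
    positivity
  exact ⟨hnonneg, hsuper, hsuper.exists_ae_tendsto_of_nonneg fun n => ae_of_all _ (hnonneg n)⟩

/-- For the aging branching process with non-decreasing ages,
`a (n+1) ≤ a n + 1`, and offspring mean `m`, the process `M n = (m+1)^{-n}·Z n`
is a non-negative supermartingale, hence converges almost surely to a finite
non-negative random variable. -/
theorem stmt19 {Ω : Type*} {mΩ : MeasurableSpace Ω} (μ : Measure Ω)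
    [IsProbabilityMeasure μ] (ℱ : Filtration ℕ mΩ)
    (m : ℝ) (hm : 0 < m)
    (a : ℕ → ℕ) (hamono : Monotone a) (hstep : ∀ n, a (n + 1) ≤ a n + 1)
    (R : ℕ → ℕ → Ω → ℕ) (hRmeas : ∀ j n, Measurable (R j n))
    (hRid : ∀ j n, IdentDistrib (R j n) (R 0 0) μ μ)
    (hRint : Integrable (fun ω => (R 0 0 ω : ℝ)) μ)
    (hRmean : ∫ ω, (R 0 0 ω : ℝ) ∂μ = m)
    (hRiid : ∀ n, iIndepFun (fun j : ℕ => R j (n + 1)) μ)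
    (hRindep : ∀ n, Indep
      (⨆ j, MeasurableSpace.comap (R j (n + 1)) inferInstance) (ℱ n) μ)
    (Z : ℕ → ℕ → Ω → ℕ)
    (hZadapted : ∀ n b, Measurable[ℱ n] (Z n b))
    (hZint : ∀ n b, Integrable (fun ω => (Z n b ω : ℝ)) μ)
    (hZ00 : ∀ ω, Z 0 0 ω = 1) (hZ0 : ∀ b, 1 ≤ b → ∀ ω, Z 0 b ω = 0)
    (hshift : ∀ n b, 1 ≤ b → ∀ ω,
      Z (n + 1) b ω = if b ≤ a (n + 1) then Z n (b - 1) ω else 0)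
    (hnew : ∀ n ω, Z (n + 1) 0 ω =
      ∑ j ∈ Finset.range (∑ b ∈ Finset.range (a n + 1), Z n b ω), R j (n + 1) ω)
    (M : ℕ → Ω → ℝ)
    (hM : ∀ n ω, M n ω =
      ((m + 1) ^ n)⁻¹ * ((∑ b ∈ Finset.range (a n + 1), Z n b ω : ℕ) : ℝ)) :
    (∀ n ω, 0 ≤ M n ω) ∧ Supermartingale M ℱ μ ∧
      ∃ L : Ω → ℝ, (∀ᵐ ω ∂μ, 0 ≤ L ω) ∧
        ∀ᵐ ω ∂μ, Tendsto (fun n => M n ω) atTop (nhds (L ω)) :=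
  stmt19_general μ ℱ m hm a hstep R hRmeas hRid hRint hRmean hRindep Z hZadapted hZint hshift hnew M
    hM
end
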